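/- arXiv:1511.00546 — 4 statements merged into one kernel-verified Lean document; each statement's English description precedes it below -/
import Mathlib

section
/- Assume ((a+b)/2)·Φ^(2) > 1. Consider the multi-type branching process T^Poi where the root has a uniform spin in {+,-} and weight governed by ν. Then, conditionally on the event that the branching process does not go extinct, Br(T^Poi) ≤ ((a+b)/2)·Φ^(2) almost surely. -/
noncomputable section

/-- The Poisson probability mass function with mean `r`. -/
def poissonPMF (r : ℝ) (k : ℕ) : ℝ := Real.exp (-r) * r ^ k / (Nat.factorial k)

/-- The first moment `Φ⁽¹⁾` of a law on `ℝ`. -/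
def firstMoment (ν : MeasureTheory.Measure ℝ) : ℝ := ∫ x, x ∂ν

/-- The second moment `Φ⁽²⁾` of a law on `ℝ`. -/
def secondMoment (ν : MeasureTheory.Measure ℝ) : ℝ := ∫ x, x ^ 2 ∂ν

/-- The size-biased version `ν*` of `ν`, given by `ν*(dx) = x·ν(dx)/Φ⁽¹⁾`. -/
def sizeBiased (ν : MeasureTheory.Measure ℝ) : MeasureTheory.Measure ℝ :=
  ν.withDensity fun x => ENNReal.ofReal (x / firstMoment ν)

/-- The multi-type branching process `T^Poi` with spins and weights.  Vertices are encoded as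
lists of child indices (the root is `[]`).  For every potential vertex `v`, `nSame v` and
`nOpp v` are the numbers of children of `v` having respectively the same spin as `v` and the
opposite spin (children with the same spin are listed first), and `wt v` is the weight of `v`.
The defining properties: all these random variables are independent across vertices and of the
uniform root spin; the root weight has law `ν` and all other weights have the size-biased law
`ν*`; and conditionally on its weight `x`, a vertex has `Poi((a/2)·Φ⁽¹⁾·x)` same-spin children
and, independently, `Poi((b/2)·Φ⁽¹⁾·x)` opposite-spin children. -/
structure TPoiTree (a b : ℝ) (ν : MeasureTheory.Measure ℝ) where
  Ω : Type
  [mΩ : MeasurableSpace Ω]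
  P : MeasureTheory.Measure Ω
  hP : MeasureTheory.IsProbabilityMeasure P
  nSame : List ℕ → Ω → ℕ
  nOpp : List ℕ → Ω → ℕ
  wt : List ℕ → Ω → ℝ
  rootSpin : Ω → Bool
  meas_nSame : ∀ v, Measurable (nSame v)
  meas_nOpp : ∀ v, Measurable (nOpp v)
  meas_wt : ∀ v, Measurable (wt v)
  meas_rootSpin : Measurable rootSpin
  rootSpin_unif : P {ω | rootSpin ω = true} = 1 / 2
  indep : ProbabilityTheory.iIndepFun
    (β := fun _ : Option (List ℕ) => ℕ × ℕ × ℝ × Bool)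
    (fun o ω => match o with
      | none => ((0 : ℕ), (0 : ℕ), (0 : ℝ), rootSpin ω)
      | some v => (nSame v ω, nOpp v ω, wt v ω, false)) P
  root_law : ∀ (j k : ℕ) (B : Set ℝ), MeasurableSet B →
    P {ω | wt [] ω ∈ B ∧ nSame [] ω = j ∧ nOpp [] ω = k}
      = ∫⁻ x in B, ENNReal.ofReal (poissonPMF (a / 2 * firstMoment ν * x) j *
          poissonPMF (b / 2 * firstMoment ν * x) k) ∂ν
  child_law : ∀ v : List ℕ, v ≠ [] → ∀ (j k : ℕ) (B : Set ℝ), MeasurableSet B →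
    P {ω | wt v ω ∈ B ∧ nSame v ω = j ∧ nOpp v ω = k}
      = ∫⁻ x in B, ENNReal.ofReal (poissonPMF (a / 2 * firstMoment ν * x) j *
          poissonPMF (b / 2 * firstMoment ν * x) k) ∂(sizeBiased ν)

/-- Membership of a vertex in the branching-process tree: each step of the path must select
an existing child. -/
def memTree {a b : ℝ} {ν : MeasureTheory.Measure ℝ} (M : TPoiTree a b ν) (ω : M.Ω)
    (v : List ℕ) : Prop :=
  ∀ k : ℕ, ∀ h : k < v.length,
    v.get ⟨k, h⟩ < M.nSame (v.take k) ω + M.nOpp (v.take k) ω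

/-- The spin of a vertex `v` of the tree: the spin flips along the path from the root exactly
at the steps whose child index is `≥ nSame` of the parent (same-spin children come first). -/
def treeSpin {a b : ℝ} {ν : MeasureTheory.Measure ℝ} (M : TPoiTree a b ν) (ω : M.Ω)
    (v : List ℕ) : Bool :=
  xor (M.rootSpin ω)
    (decide (Odd (((List.range v.length).filter
      (fun k => decide (M.nSame (v.take k) ω ≤ v.getD k 0))).length)))

/-- A rooted tree, encoded as the set of its vertices: each vertex is the list of the child
indices along the path from the root (the root is `[]`).  The set must contain the root and be
closed under taking parents. -/
def IsRootedTree (T : Set (List ℕ)) : Prop :=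
  ([] : List ℕ) ∈ T ∧ ∀ (v : List ℕ) (i : ℕ), v ++ [i] ∈ T → v ∈ T

/-- An infinite ray from the root in the tree `T`. -/
def IsRay (T : Set (List ℕ)) (f : ℕ → List ℕ) : Prop :=
  f 0 = [] ∧ ∀ k : ℕ, f k ∈ T ∧ ∃ i : ℕ, f (k + 1) = f k ++ [i]

/-- A cutset of the rooted tree `T`: a set of vertices of `T` meeting every infinite ray
from the root. -/
def IsCutset (T : Set (List ℕ)) (Γ : Set (List ℕ)) : Prop :=
  Γ ⊆ T ∧ ∀ f : ℕ → List ℕ, IsRay T f → ∃ k : ℕ, f k ∈ Γ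

/-- `∑_{v ∈ Γ} λ^{-|v|}`, the weight of a cutset `Γ` at rate `λ`. -/
def cutsetSum (lam : ℝ) (Γ : Set (List ℕ)) : ENNReal :=
  ∑' v : Γ, ENNReal.ofReal ((1 / lam) ^ (v : List ℕ).length)

-- The branching number of a rooted tree `T`: it is `0` if `T` is finite and otherwise
-- `sup {λ ≥ 1 : inf_Γ ∑_{v ∈ Γ} λ^{-|v|} > 0}`, the infimum running over all cutsets `Γ`.
open Classical in
def branchingNumber (T : Set (List ℕ)) : ℝ :=
  if T.Infinite then
    sSup {lam : ℝ | 1 ≤ lam ∧ 0 < ⨅ Γ ∈ {Γ' | IsCutset T Γ'}, cutsetSum lam Γ}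
  else 0

/-- The subtree of `T` rooted at the `i`-th child of the root, re-rooted at that child. -/
def rootSubtree (T : Set (List ℕ)) (i : ℕ) : Set (List ℕ) :=
  {w : List ℕ | i :: w ∈ T}

open MeasureTheory ProbabilityTheory Filter Topology

/-!
First-moment method. A vertex of weight `x` has on average `((a+b)/2)·Φ⁽¹⁾·x` children; the root
weight has mean `Φ⁽¹⁾` and every other weight, being size-biased, has mean `Φ⁽²⁾/Φ⁽¹⁾`. Since the
offspring counts along a path are independent, the expected size of level `n+1` is
`((a+b)/2)·(Φ⁽¹⁾)²·λⁿ` with `λ = ((a+b)/2)·Φ⁽²⁾`. Hence for `q > λ` the series `∑ q⁻ⁿ Zₙ` over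
the level sizes `Zₙ` has finite mean and is almost surely finite, so `q⁻ⁿ Zₙ → 0`. Levels are
cutsets, so `inf_Π ∑_{v ∈ Π} λ'^{-|v|} = 0` for every `λ' > q`; letting `q ↓ λ` along the
rationals gives `Br ≤ λ` almost surely, a fortiori under the law conditioned on survival.
-/

open scoped ENNReal

lemma poissonPMF_nonneg {r : ℝ} (hr : 0 ≤ r) (k : ℕ) : 0 ≤ poissonPMF r k := by
  unfold _root_.poissonPMF
  positivity

lemma hasSum_poissonPMF {r : ℝ} (hr : 0 ≤ r) : HasSum (poissonPMF r) 1 :=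
  hasSum_one_poissonMeasure ⟨r, hr⟩

lemma succ_mul_poissonPMF_succ (r : ℝ) (k : ℕ) :
    ((k : ℝ) + 1) * poissonPMF r (k + 1) = r * poissonPMF r k := by
  simp only [_root_.poissonPMF, Nat.factorial_succ, pow_succ, Nat.cast_mul, Nat.cast_succ]
  field_simp

lemma hasSum_natCast_mul_poissonPMF {r : ℝ} (hr : 0 ≤ r) :
    HasSum (fun k : ℕ => (k : ℝ) * poissonPMF r k) r := by
  have hshift : HasSum (fun k : ℕ => ((k + 1 : ℕ) : ℝ) * poissonPMF r (k + 1)) r := by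
    have heq : (fun k : ℕ => ((k + 1 : ℕ) : ℝ) * poissonPMF r (k + 1))
        = fun k => r * poissonPMF r k :=
      funext fun k => by push_cast; exact succ_mul_poissonPMF_succ r k
    rw [heq]
    simpa only [mul_one] using (hasSum_poissonPMF hr).mul_left r
  have h := HasSum.zero_add (f := fun k : ℕ => (k : ℝ) * poissonPMF r k) hshift
  rwa [Nat.cast_zero, zero_mul, zero_add] at h

lemma tsum_ofReal_of_hasSum {ι : Type*} {f : ι → ℝ} {s : ℝ} (hf : ∀ i, 0 ≤ f i)
    (h : HasSum f s) : ∑' i, ENNReal.ofReal (f i) = ENNReal.ofReal s := by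
  rw [← ENNReal.ofReal_tsum_of_nonneg hf h.summable, h.tsum_eq]

lemma tsum_natCast_mul_ofReal_poissonPMF {r : ℝ} (hr : 0 ≤ r) :
    ∑' k : ℕ, (k : ℝ≥0∞) * ENNReal.ofReal (poissonPMF r k) = ENNReal.ofReal r := by
  simp_rw [← ENNReal.ofReal_natCast, ← ENNReal.ofReal_mul (Nat.cast_nonneg _)]
  exact tsum_ofReal_of_hasSum (fun k => mul_nonneg k.cast_nonneg (poissonPMF_nonneg hr k))
    (hasSum_natCast_mul_poissonPMF hr)

lemma tsum_add_mul_ofReal_poissonPMF_mul {r s : ℝ} (hr : 0 ≤ r) (hs : 0 ≤ s) :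
    ∑' p : ℕ × ℕ, ((p.1 + p.2 : ℕ) : ℝ≥0∞) *
      ENNReal.ofReal (poissonPMF r p.1 * poissonPMF s p.2) = ENNReal.ofReal (r + s) := by
  have hsum₁ := tsum_ofReal_of_hasSum (poissonPMF_nonneg hr) (hasSum_poissonPMF hr)
  have hsum₂ := tsum_ofReal_of_hasSum (poissonPMF_nonneg hs) (hasSum_poissonPMF hs)
  have hsplit : ∀ p : ℕ × ℕ, ((p.1 + p.2 : ℕ) : ℝ≥0∞) *
      ENNReal.ofReal (poissonPMF r p.1 * poissonPMF s p.2)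
      = (p.1 : ℝ≥0∞) * ENNReal.ofReal (poissonPMF r p.1) * ENNReal.ofReal (poissonPMF s p.2)
        + ENNReal.ofReal (poissonPMF r p.1) * ((p.2 : ℝ≥0∞) * ENNReal.ofReal (poissonPMF s p.2)) :=
    fun p => by rw [ENNReal.ofReal_mul (poissonPMF_nonneg hr _)]; push_cast; ring
  rw [tsum_congr hsplit, ENNReal.tsum_add, ENNReal.ofReal_add hr hs]
  simp only [ENNReal.tsum_prod', ENNReal.tsum_mul_left, ENNReal.tsum_mul_right,
    tsum_natCast_mul_ofReal_poissonPMF hr, tsum_natCast_mul_ofReal_poissonPMF hs, hsum₁, hsum₂,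
    ENNReal.ofReal_one, mul_one, one_mul]

lemma secondMoment_nonneg (ν : Measure ℝ) : 0 ≤ secondMoment ν :=
  integral_nonneg fun x => sq_nonneg x

section Moments

variable {φmin φmax : ℝ} {ν : Measure ℝ} [IsProbabilityMeasure ν]

lemma integrable_pow_of_ae_mem_Icc (hsupp : ∀ᵐ x ∂ν, x ∈ Set.Icc φmin φmax) (m : ℕ) :
    Integrable (fun x : ℝ => x ^ m) ν := by
  refine .of_bound (by fun_prop) (max |φmin| |φmax| ^ m) ?_
  filter_upwards [hsupp] with x hx
  rw [norm_pow, Real.norm_eq_abs]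
  exact pow_le_pow_left₀ (abs_nonneg x) (abs_le_max_abs_abs hx.1 hx.2) m

variable (hφmin : 0 < φmin) (hsupp : ∀ᵐ x ∂ν, x ∈ Set.Icc φmin φmax)
include hφmin hsupp

lemma firstMoment_pos : 0 < firstMoment ν := by
  have hmono := integral_mono_ae (integrable_const φmin)
    (by simpa using integrable_pow_of_ae_mem_Icc hsupp 1) (hsupp.mono fun x hx => hx.1)
  simp only [integral_const, probReal_univ, one_smul] at hmono
  exact hφmin.trans_le hmono

lemma lintegral_ofReal_pow (m : ℕ) :
    ∫⁻ x, ENNReal.ofReal (x ^ m) ∂ν = ENNReal.ofReal (∫ x, x ^ m ∂ν) :=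
  (ofReal_integral_eq_lintegral_ofReal (integrable_pow_of_ae_mem_Icc hsupp m)
    (hsupp.mono fun _ hx => pow_nonneg (hφmin.le.trans hx.1) m)).symm

lemma lintegral_ofReal_eq_firstMoment :
    ∫⁻ x, ENNReal.ofReal x ∂ν = ENNReal.ofReal (firstMoment ν) := by
  simpa [firstMoment] using lintegral_ofReal_pow hφmin hsupp 1

lemma lintegral_ofReal_sizeBiased :
    ∫⁻ x, ENNReal.ofReal x ∂(sizeBiased ν) = ENNReal.ofReal (secondMoment ν / firstMoment ν) := by
  have hΦ := firstMoment_pos hφmin hsupp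
  rw [sizeBiased, lintegral_withDensity_eq_lintegral_mul ν (by fun_prop) ENNReal.measurable_ofReal]
  have hdensity : ∀ᵐ x ∂ν, ((fun x => ENNReal.ofReal (x / firstMoment ν)) * ENNReal.ofReal) x
      = ENNReal.ofReal (firstMoment ν)⁻¹ * ENNReal.ofReal (x ^ 2) := by
    filter_upwards [hsupp] with x hx
    have hx : 0 ≤ x := hφmin.le.trans hx.1
    rw [Pi.mul_apply, ← ENNReal.ofReal_mul (by positivity), ← ENNReal.ofReal_mul (by positivity)]
    congr 1
    ring
  rw [lintegral_congr_ae hdensity, lintegral_const_mul _ (by fun_prop),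
    lintegral_ofReal_pow hφmin hsupp, ← ENNReal.ofReal_mul (by positivity), secondMoment]
  congr 1
  ring

end Moments

lemma tsum_indicator_Iio_one (m : ℕ) :
    ∑' c : ℕ, (Set.Iio m).indicator (1 : ℕ → ℝ≥0∞) c = m := by
  rw [← tsum_subtype, Pi.one_def, ENNReal.tsum_const]
  simp

lemma tsum_measure_lt_eq_lintegral {Ω : Type*} [MeasurableSpace Ω] {μ : Measure Ω}
    {N : Ω → ℕ} (hN : Measurable N) :
    ∑' c : ℕ, μ {ω | c < N ω} = ∫⁻ ω, (N ω : ℝ≥0∞) ∂μ := by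
  have hmeas : ∀ c : ℕ, MeasurableSet {ω | c < N ω} := fun c => hN measurableSet_Ioi
  simp_rw [← tsum_indicator_Iio_one, ← lintegral_indicator_one (hmeas _)]
  rw [← lintegral_tsum fun c => (measurable_one.indicator (hmeas c)).aemeasurable]
  rfl

lemma tsum_ite_length_succ {α : Type*} (g : List α → ℝ≥0∞) (n : ℕ) :
    ∑' w : List α, (if w.length = n + 1 then g w else 0)
      = ∑' t : List α, if t.length = n then ∑' c, g (t ++ [c]) else 0 := by
  have hinj : Function.Injective fun p : List α × α => p.1 ++ [p.2] :=
    fun p q h => by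
      obtain ⟨h₁, h₂⟩ := List.append_inj' h rfl
      exact Prod.ext h₁ (List.singleton_inj.1 h₂)
  have hrange : Function.support (fun w : List α => if w.length = n + 1 then g w else 0)
      ⊆ Set.range fun p : List α × α => p.1 ++ [p.2] := by
    intro w hw
    rcases List.eq_nil_or_concat w with rfl | ⟨t, c, rfl⟩
    · simp at hw
    · exact ⟨(t, c), by simp⟩
  rw [← hinj.tsum_eq hrange, ENNReal.tsum_prod']
  refine tsum_congr fun t => ?_
  split_ifs with ht <;> simp [ht]

def levelSet (T : Set (List ℕ)) (n : ℕ) : Set (List ℕ) := {v ∈ T | v.length = n}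

def levelCount (T : Set (List ℕ)) (n : ℕ) : ℝ≥0∞ := ∑' v, (levelSet T n).indicator 1 v

lemma length_of_isRay {T : Set (List ℕ)} {f : ℕ → List ℕ} (hf : IsRay T f) (k : ℕ) :
    (f k).length = k := by
  induction k with
  | zero => simp [hf.1]
  | succ k ih =>
    obtain ⟨i, hi⟩ := (hf.2 k).2
    simp [hi, ih]

lemma isCutset_levelSet (T : Set (List ℕ)) (n : ℕ) : IsCutset T (levelSet T n) :=
  ⟨fun _ hv => hv.1, fun _ hf => ⟨n, (hf.2 n).1, length_of_isRay hf n⟩⟩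

lemma cutsetSum_levelSet (lam : ℝ) (T : Set (List ℕ)) (n : ℕ) :
    cutsetSum lam (levelSet T n) = ENNReal.ofReal ((1 / lam) ^ n) * levelCount T n := by
  rw [cutsetSum, tsum_subtype (levelSet T n) fun v => ENNReal.ofReal ((1 / lam) ^ v.length),
    levelCount, ← ENNReal.tsum_mul_left]
  refine tsum_congr fun v => ?_
  by_cases hv : v ∈ levelSet T n
  · simp [Set.indicator_of_mem hv, hv.2]
  · simp [Set.indicator_of_notMem hv]

lemma iInf_cutsetSum_eq_zero {T : Set (List ℕ)} {q lam : ℝ} (hq : 0 < q) (hlam : q ≤ lam)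
    (h : ∑' n, ENNReal.ofReal ((1 / q) ^ n) * levelCount T n ≠ ∞) :
    ⨅ Γ ∈ {Γ | IsCutset T Γ}, cutsetSum lam Γ = 0 := by
  refine le_antisymm (ge_of_tendsto' (ENNReal.tendsto_atTop_zero_of_tsum_ne_top h) fun n => ?_)
    bot_le
  calc ⨅ Γ ∈ {Γ | IsCutset T Γ}, cutsetSum lam Γ
      ≤ cutsetSum lam (levelSet T n) := iInf₂_le _ (isCutset_levelSet T n)
    _ = ENNReal.ofReal ((1 / lam) ^ n) * levelCount T n := cutsetSum_levelSet lam T n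
    _ ≤ ENNReal.ofReal ((1 / q) ^ n) * levelCount T n := by
        have hlam0 : 0 < lam := hq.trans_le hlam
        gcongr

lemma branchingNumber_le {T : Set (List ℕ)} {r : ℝ} (hr : 0 ≤ r)
    (h : ∀ q : ℚ, r < q → ∑' n, ENNReal.ofReal ((1 / q) ^ n) * levelCount T n ≠ ∞) :
    branchingNumber T ≤ r := by
  unfold branchingNumber
  split_ifs
  · refine Real.sSup_le (fun lam ⟨_, hpos⟩ => ?_) hr
    by_contra! hlt
    obtain ⟨q, hrq, hqlam⟩ := exists_rat_btwn hlt
    exact hpos.ne' (iInf_cutsetSum_eq_zero (hr.trans_lt hrq) hqlam.le (h q hrq))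
  · exact hr

def weightLaw (ν : Measure ℝ) (u : List ℕ) : Measure ℝ := if u = [] then ν else sizeBiased ν

lemma ae_nonneg_weightLaw {ν : Measure ℝ} (hν : ∀ᵐ x ∂ν, 0 ≤ x) (u : List ℕ) :
    ∀ᵐ x ∂(weightLaw ν u), 0 ≤ x := by
  unfold weightLaw
  split_ifs
  · exact hν
  · exact (withDensity_absolutelyContinuous ν _).ae_le hν

namespace TPoiTree

variable {a b : ℝ} {ν : Measure ℝ}

instance (M : TPoiTree a b ν) : MeasurableSpace M.Ω := M.mΩ

instance (M : TPoiTree a b ν) : IsProbabilityMeasure M.P := M.hP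

def tree (M : TPoiTree a b ν) (ω : M.Ω) : Set (List ℕ) := {v | memTree M ω v}

def numChildren (M : TPoiTree a b ν) (u : List ℕ) (ω : M.Ω) : ℕ := M.nSame u ω + M.nOpp u ω

variable (M : TPoiTree a b ν)

lemma measurable_numChildren (u : List ℕ) : Measurable (M.numChildren u) :=
  (M.meas_nSame u).add (M.meas_nOpp u)

lemma memTree_nil (ω : M.Ω) : memTree M ω [] := fun _ h => absurd h (Nat.not_lt_zero _)

lemma memTree_append_singleton (ω : M.Ω) (t : List ℕ) (c : ℕ) :
    memTree M ω (t ++ [c]) ↔ memTree M ω t ∧ c < M.numChildren t ω := by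
  simp only [memTree, numChildren, List.length_append, List.length_singleton, List.get_eq_getElem]
  constructor
  · intro h
    refine ⟨fun k hk => ?_, ?_⟩
    · simpa [List.getElem_append_left hk, List.take_append_of_le_length hk.le] using h k (by omega)
    · simpa using h t.length (by omega)
  · rintro ⟨ht, hc⟩ k hk
    rcases Nat.lt_succ_iff_lt_or_eq.1 hk with hk | rfl
    · simpa [List.getElem_append_left hk, List.take_append_of_le_length hk.le] using ht k hk
    · simpa using hc

lemma measurableSet_memTree (v : List ℕ) : MeasurableSet {ω | memTree M ω v} := by
  induction v using List.reverseRecOn with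
  | nil => simp [memTree_nil]
  | append_singleton t c ht =>
    simp_rw [memTree_append_singleton]
    exact ht.inter (M.measurable_numChildren t measurableSet_Ioi)

lemma measure_memTree (v : List ℕ) :
    M.P {ω | memTree M ω v}
      = ∏ k ∈ Finset.range v.length, M.P {ω | v.getD k 0 < M.numChildren (v.take k) ω} := by
  have hinj : ∀ k ∈ Finset.range v.length, ∀ l ∈ Finset.range v.length,
      some (v.take k) = some (v.take l) → k = l := fun k hk l hl h => by
    simpa [(Finset.mem_range.1 hk).le, (Finset.mem_range.1 hl).le] using
      congrArg List.length (Option.some_inj.1 h)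
  -- The family is indexed by vertices, so the event `v[k] < numChildren (v.take k)` attached to
  -- the index `some (v.take k)` has to recover `k` as the length of `v.take k`.
  have key := M.indep.measure_inter_preimage_eq_mul
    ((Finset.range v.length).image fun k => some (v.take k))
    (sets := fun o => {p | v.getD ((o.map List.length).getD 0) 0 < p.1 + p.2.1})
    (fun _ _ => measurableSet_lt measurable_const (by fun_prop))
  rw [Finset.set_biInter_finset_image, Finset.prod_image hinj] at key
  convert key using 1
  · congr 1
    ext ω
    simp only [memTree, List.get_eq_getElem]
    simp only [Set.mem_iInter, Set.mem_preimage, Finset.mem_range]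
    exact forall₂_congr fun k hk => by simp [hk.le, hk]
  · refine Finset.prod_congr rfl fun k hk => ?_
    congr 1
    ext ω
    simp [numChildren, (Finset.mem_range.1 hk).le]

lemma measure_memTree_append_singleton (t : List ℕ) (c : ℕ) :
    M.P {ω | memTree M ω (t ++ [c])}
      = M.P {ω | memTree M ω t} * M.P {ω | c < M.numChildren t ω} := by
  rw [measure_memTree, measure_memTree, List.length_append, List.length_singleton,
    Finset.prod_range_succ]
  congr 1
  · refine Finset.prod_congr rfl fun k hk => ?_
    have hk := Finset.mem_range.1 hk
    rw [List.getD_append _ _ _ _ hk, List.take_append_of_le_length hk.le]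
  · simp

lemma measure_nSame_nOpp (u : List ℕ) (j k : ℕ) :
    M.P {ω | M.nSame u ω = j ∧ M.nOpp u ω = k}
      = ∫⁻ x, ENNReal.ofReal (poissonPMF (a / 2 * firstMoment ν * x) j *
          poissonPMF (b / 2 * firstMoment ν * x) k) ∂(weightLaw ν u) := by
  rcases eq_or_ne u [] with rfl | hu
  · simpa [weightLaw] using M.root_law j k Set.univ MeasurableSet.univ
  · simpa [weightLaw, hu] using M.child_law u hu j k Set.univ MeasurableSet.univ

lemma lintegral_numChildren (ha : 0 ≤ a) (hb : 0 ≤ b) (hν : ∀ᵐ x ∂ν, 0 ≤ x) (u : List ℕ) :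
    ∫⁻ ω, (M.numChildren u ω : ℝ≥0∞) ∂M.P
      = ENNReal.ofReal ((a + b) / 2 * firstMoment ν) * ∫⁻ x, ENNReal.ofReal x ∂(weightLaw ν u) := by
  have hΦ : 0 ≤ firstMoment ν := integral_nonneg_of_ae hν
  have hX : Measurable fun ω => (M.nSame u ω, M.nOpp u ω) := (M.meas_nSame u).prodMk (M.meas_nOpp u)
  have hpmf : ∀ p : ℕ × ℕ, Measurable fun x : ℝ =>
      ENNReal.ofReal (poissonPMF (a / 2 * firstMoment ν * x) p.1 *
        poissonPMF (b / 2 * firstMoment ν * x) p.2) := fun p => by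
    unfold _root_.poissonPMF
    fun_prop
  calc ∫⁻ ω, (M.numChildren u ω : ℝ≥0∞) ∂M.P
      = ∫⁻ p : ℕ × ℕ, ((p.1 + p.2 : ℕ) : ℝ≥0∞) ∂(M.P.map fun ω => (M.nSame u ω, M.nOpp u ω)) :=
        (lintegral_map (f := fun p : ℕ × ℕ => ((p.1 + p.2 : ℕ) : ℝ≥0∞))
          (measurable_of_countable _) hX).symm
    _ = ∑' p : ℕ × ℕ, ∫⁻ x, ((p.1 + p.2 : ℕ) : ℝ≥0∞) *
          ENNReal.ofReal (poissonPMF (a / 2 * firstMoment ν * x) p.1 *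
            poissonPMF (b / 2 * firstMoment ν * x) p.2) ∂(weightLaw ν u) := by
        rw [lintegral_countable']
        refine tsum_congr fun p => ?_
        rw [Measure.map_apply hX (measurableSet_singleton p), lintegral_const_mul _ (hpmf p),
          ← measure_nSame_nOpp]
        congr 2
        ext ω
        simp [Prod.ext_iff]
    _ = ∫⁻ x, ENNReal.ofReal ((a + b) / 2 * firstMoment ν) * ENNReal.ofReal x ∂(weightLaw ν u) := by
        rw [← lintegral_tsum fun p => ((hpmf p).const_mul _).aemeasurable]
        refine lintegral_congr_ae ?_
        filter_upwards [ae_nonneg_weightLaw hν u] with x hx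
        rw [tsum_add_mul_ofReal_poissonPMF_mul (by positivity) (by positivity),
          ← ENNReal.ofReal_mul (by positivity)]
        ring_nf
    _ = _ := lintegral_const_mul _ ENNReal.measurable_ofReal

lemma indicator_levelSet_tree (n : ℕ) (v : List ℕ) (ω : M.Ω) :
    (levelSet (M.tree ω) n).indicator 1 v
      = {ω | memTree M ω v ∧ v.length = n}.indicator (1 : M.Ω → ℝ≥0∞) ω :=
  rfl

lemma measurableSet_memTree_length (n : ℕ) (v : List ℕ) :
    MeasurableSet {ω | memTree M ω v ∧ v.length = n} :=
  (M.measurableSet_memTree v).inter (MeasurableSet.const _)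

lemma measurable_levelCount (n : ℕ) : Measurable fun ω => levelCount (M.tree ω) n := by
  simp_rw [levelCount, indicator_levelSet_tree]
  exact .tsum fun v => measurable_one.indicator (M.measurableSet_memTree_length n v)

lemma lintegral_levelCount (n : ℕ) :
    ∫⁻ ω, levelCount (M.tree ω) n ∂M.P
      = ∑' v : List ℕ, if v.length = n then M.P {ω | memTree M ω v} else 0 := by
  simp_rw [levelCount, indicator_levelSet_tree]
  rw [lintegral_tsum fun v =>
    (measurable_one.indicator (M.measurableSet_memTree_length n v)).aemeasurable]
  refine tsum_congr fun v => ?_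
  rw [lintegral_indicator_one (M.measurableSet_memTree_length n v)]
  split_ifs with hv <;> simp [hv]

lemma lintegral_levelCount_zero : ∫⁻ ω, levelCount (M.tree ω) 0 ∂M.P = 1 := by
  rw [lintegral_levelCount, tsum_eq_single []
    fun v hv => if_neg fun h => hv (List.length_eq_zero_iff.1 h)]
  simp [memTree_nil]

lemma lintegral_levelCount_succ (n : ℕ) :
    ∫⁻ ω, levelCount (M.tree ω) (n + 1) ∂M.P
      = ∑' t : List ℕ, if t.length = n
          then M.P {ω | memTree M ω t} * ∑' c : ℕ, M.P {ω | c < M.numChildren t ω} else 0 := by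
  simp_rw [lintegral_levelCount, tsum_ite_length_succ, measure_memTree_append_singleton,
    ENNReal.tsum_mul_left]

section Expectation

variable {φmin φmax : ℝ} [IsProbabilityMeasure ν] (ha : 0 ≤ a) (hb : 0 ≤ b) (hφmin : 0 < φmin)
  (hsupp : ∀ᵐ x ∂ν, x ∈ Set.Icc φmin φmax)
include ha hb hφmin hsupp

lemma tsum_measure_lt_numChildren_nil :
    ∑' c : ℕ, M.P {ω | c < M.numChildren [] ω}
      = ENNReal.ofReal ((a + b) / 2 * firstMoment ν * firstMoment ν) := by
  have hΦ := firstMoment_pos hφmin hsupp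
  rw [tsum_measure_lt_eq_lintegral (M.measurable_numChildren _),
    M.lintegral_numChildren ha hb (hsupp.mono fun _ hx => hφmin.le.trans hx.1),
    weightLaw, if_pos rfl, lintegral_ofReal_eq_firstMoment hφmin hsupp,
    ← ENNReal.ofReal_mul (by positivity)]

lemma tsum_measure_lt_numChildren_of_ne_nil {u : List ℕ} (hu : u ≠ []) :
    ∑' c : ℕ, M.P {ω | c < M.numChildren u ω} = ENNReal.ofReal ((a + b) / 2 * secondMoment ν) := by
  have hΦ := firstMoment_pos hφmin hsupp
  rw [tsum_measure_lt_eq_lintegral (M.measurable_numChildren _),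
    M.lintegral_numChildren ha hb (hsupp.mono fun _ hx => hφmin.le.trans hx.1),
    weightLaw, if_neg hu, lintegral_ofReal_sizeBiased hφmin hsupp,
    ← ENNReal.ofReal_mul (by positivity)]
  congr 1
  field_simp

lemma lintegral_levelCount_succ_eq (n : ℕ) :
    ∫⁻ ω, levelCount (M.tree ω) (n + 1) ∂M.P
      = ENNReal.ofReal ((a + b) / 2 * firstMoment ν * firstMoment ν)
          * ENNReal.ofReal ((a + b) / 2 * secondMoment ν) ^ n := by
  induction n with
  | zero =>
    rw [lintegral_levelCount_succ, tsum_eq_single []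
      fun t ht => if_neg fun h => ht (List.length_eq_zero_iff.1 h)]
    simp [memTree_nil, M.tsum_measure_lt_numChildren_nil ha hb hφmin hsupp]
  | succ n ih =>
    have hterm : ∀ t : List ℕ, (if t.length = n + 1
        then M.P {ω | memTree M ω t} * ∑' c : ℕ, M.P {ω | c < M.numChildren t ω} else 0)
        = (if t.length = n + 1 then M.P {ω | memTree M ω t} else 0)
          * ENNReal.ofReal ((a + b) / 2 * secondMoment ν) := fun t => by
      split_ifs with ht
      · rw [M.tsum_measure_lt_numChildren_of_ne_nil ha hb hφmin hsupp
          (List.ne_nil_of_length_eq_add_one ht)]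
      · rw [zero_mul]
    rw [lintegral_levelCount_succ, tsum_congr hterm, ENNReal.tsum_mul_right,
      ← lintegral_levelCount, ih, pow_succ, mul_assoc]

lemma lintegral_tsum_levelCount_ne_top {q : ℝ} (hq : (a + b) / 2 * secondMoment ν < q) :
    ∫⁻ ω, ∑' n, ENNReal.ofReal ((1 / q) ^ n) * levelCount (M.tree ω) n ∂M.P ≠ ∞ := by
  have hΦ := firstMoment_pos hφmin hsupp
  have hΦ₂ := secondMoment_nonneg ν
  have hq0 : 0 < q := lt_of_le_of_lt (by positivity) hq
  have hterm : ∀ n : ℕ,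
      ENNReal.ofReal ((1 / q) ^ (n + 1)) * ∫⁻ ω, levelCount (M.tree ω) (n + 1) ∂M.P
      = ENNReal.ofReal ((a + b) / 2 * firstMoment ν * firstMoment ν / q)
        * ENNReal.ofReal ((a + b) / 2 * secondMoment ν / q) ^ n := fun n => by
    rw [M.lintegral_levelCount_succ_eq ha hb hφmin hsupp, ← ENNReal.ofReal_pow (by positivity),
      ← ENNReal.ofReal_pow (by positivity), ← ENNReal.ofReal_mul (by positivity),
      ← ENNReal.ofReal_mul (by positivity), ← ENNReal.ofReal_mul (by positivity)]
    congr 1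
    rw [div_pow, div_pow, one_pow, pow_succ]
    field_simp
  have hratio : ENNReal.ofReal ((a + b) / 2 * secondMoment ν / q) < 1 :=
    ENNReal.ofReal_lt_one.2 ((div_lt_one hq0).2 hq)
  rw [lintegral_tsum fun n => ((M.measurable_levelCount n).const_mul _).aemeasurable]
  simp_rw [lintegral_const_mul _ (M.measurable_levelCount _)]
  rw [tsum_eq_zero_add' ENNReal.summable, tsum_congr hterm, ENNReal.tsum_mul_left]
  exact ENNReal.add_ne_top.2 ⟨by simp [M.lintegral_levelCount_zero],
    ENNReal.mul_ne_top ENNReal.ofReal_ne_top (tsum_geometric_lt_top.2 hratio).ne⟩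

lemma ae_tsum_levelCount_ne_top :
    ∀ᵐ ω ∂M.P, ∀ q : ℚ, (a + b) / 2 * secondMoment ν < q →
      ∑' n, ENNReal.ofReal ((1 / q) ^ n) * levelCount (M.tree ω) n ≠ ∞ := by
  refine ae_all_iff.2 fun q => ?_
  by_cases hq : (a + b) / 2 * secondMoment ν < q
  · have hmeas : Measurable fun ω =>
        ∑' n, ENNReal.ofReal ((1 / (q : ℝ)) ^ n) * levelCount (M.tree ω) n :=
      .tsum fun n => (M.measurable_levelCount n).const_mul _
    filter_upwards [ae_lt_top hmeas (M.lintegral_tsum_levelCount_ne_top ha hb hφmin hsupp hq)]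
      with ω hω _ using hω.ne
  · exact .of_forall fun _ h => absurd h hq

end Expectation

end TPoiTree

theorem stmt4_general
    (a b φmin φmax : ℝ) (ha : 0 < a) (hb : 0 < b)
    (hφmin : 0 < φmin)
    (ν : Measure ℝ) (hν : IsProbabilityMeasure ν)
    (hsupp : ∀ᵐ x ∂ν, x ∈ Set.Icc φmin φmax)
    (M : TPoiTree a b ν) :
    ∀ᵐ ω ∂(M.P[|{ω' | {v : List ℕ | memTree M ω' v}.Infinite}]),
      branchingNumber {v : List ℕ | memTree M ω v} ≤ (a + b) / 2 * secondMoment ν := by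
  have hrate : 0 ≤ (a + b) / 2 * secondMoment ν := by
    have := secondMoment_nonneg ν
    positivity
  refine cond_absolutelyContinuous.ae_le ?_
  filter_upwards [M.ae_tsum_levelCount_ne_top ha.le hb.le hφmin hsupp] with ω hω
  exact branchingNumber_le hrate hω

/-- **Upper bound on the branching number of `T^Poi`.**
Assume `((a+b)/2)·Φ⁽²⁾ > 1`.  Consider the multi-type branching process `T^Poi` where the root
has a uniform spin in `{+,-}` and weight governed by `ν`.  Then, conditionally on the event
that the branching process does not go extinct (i.e. that the tree is infinite),
`Br(T^Poi) ≤ ((a+b)/2)·Φ⁽²⁾` almost surely. -/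
theorem stmt4
    (a b φmin φmax : ℝ) (ha : 0 < a) (hb : 0 < b)
    (hφmin : 0 < φmin) (hφ : φmin ≤ φmax)
    (ν : Measure ℝ) (hν : IsProbabilityMeasure ν)
    (hsupp : ∀ᵐ x ∂ν, x ∈ Set.Icc φmin φmax)
    (hsup : 1 < (a + b) / 2 * secondMoment ν)
    (M : TPoiTree a b ν) :
    ∀ᵐ ω ∂(M.P[|{ω' | {v : List ℕ | memTree M ω' v}.Infinite}]),
      branchingNumber {v : List ℕ | memTree M ω v} ≤ (a + b) / 2 * secondMoment ν :=
  stmt4_general a b φmin φmax ha hb hφmin ν hν hsupp M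
end
end

section
/- In the exploration process of the DC-PPM, condition on the first m explored vertices having types x_1, …, x_m. Then the types of the unexplored vertices in U(m) are i.i.d. with law μ^(m) = μ^(m)_{x_1,…,x_m} given by dμ^(m)(y) = g(y)·dμ(y) / ∫_S g(z) dμ(z), where g(y) = Π_{i=1}^m (1 - κ(x_i, y)/n). Moreover, in the regime m = o(n) there exists N_m such that for all n ≥ N_m and all (x_1, …, x_m), the total variation distance between μ^(m)_{x_1,…,x_m} and μ is at most 2κ_max·m/n. -/
/-!
Conditionally on the explored types, the unexplored vertices carry independent pairs
(type, edges to the explored set), and a vertex of type `y` has no such edge with probability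
`g(y) = ∏ i, (1 - κ(x_i, y)/n)`. On the event that no edge is present the joint law of the types
is therefore the product of the finite measures `g dμ`, and conditioning normalizes each factor
into `μ^{(m)}`.

For the total variation bound, `(1 - κ_max/n)^m ≤ g ≤ 1` on the support of `μ`. If
`δ • μ ≤ ρ ≤ μ`, then `ρ(S) ≤ 1`, so `ρ(B)/ρ(S) ≥ δ μ(B) ≥ μ(B) - (1 - δ)`; applied to `B` and to
its complement this bounds the total variation by `1 - δ`, and Bernoulli's inequality gives
`1 - (1 - κ_max/n)^m ≤ κ_max m/n` once `n > κ_max`.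
-/

noncomputable section

/-- The kernel `κ(x,y) = |xy|·(a·1{xy>0} + b·1{xy<0})` on the type space `S = (-W) ∪ W`. -/
def kfun (a b : ℝ) (x y : ℝ) : ℝ := |x * y| * (if 0 < x * y then a else b)

/-- `κ_max`, the maximum of `κ` on `S × S` when `W ⊆ [φmin, φmax]`. -/
def kfunMax (a b φmax : ℝ) : ℝ := max a b * φmax ^ 2

/-- `κ_min`, the minimum of `κ` on `S × S` when `W ⊆ [φmin, φmax]`. -/
def kfunMin (a b φmin : ℝ) : ℝ := min a b * φmin ^ 2

/-- The law `μ` of a type `x = σφ`: `μ(A) = ∫_A (1/2) dν(|x|)`. -/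
def typeLaw (ν : MeasureTheory.Measure ℝ) : MeasureTheory.Measure ℝ :=
  (2 : ENNReal)⁻¹ • (ν.map (fun x => -x) + ν)

/-- Normalization of a finite nonzero measure to a probability measure. -/
def mnormalize (μ : MeasureTheory.Measure ℝ) : MeasureTheory.Measure ℝ :=
  (μ Set.univ)⁻¹ • μ

/-- The law `μ^{(m)} = μ^{(m)}_{x_1,…,x_m}` of the types of unexplored vertices after the
vertices of types `x_1, …, x_m` have been explored:
`dμ^{(m)}(y) ∝ ∏_{i=1}^m (1 - κ(x_i,y)/n) · dμ(y)`. -/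
def muExplored (a b : ℝ) (ν : MeasureTheory.Measure ℝ) (n m : ℕ) (x : Fin m → ℝ) :
    MeasureTheory.Measure ℝ :=
  mnormalize ((typeLaw ν).withDensity fun y =>
    ENNReal.ofReal (∏ i : Fin m, (1 - kfun a b (x i) y / n)))

/-- The size-biased kernel law `dμ*_x(y) ∝ κ(x,y)·dμ(y)` associated to a base law `μ`. -/
def kernelBiased (a b : ℝ) (μ : MeasureTheory.Measure ℝ) (x : ℝ) : MeasureTheory.Measure ℝ :=
  mnormalize (μ.withDensity fun y => ENNReal.ofReal (kfun a b x y))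

/-- `λ_x(S) = ∫_S κ(x,y) dμ(y)`. -/
def lamTotal (a b : ℝ) (ν : MeasureTheory.Measure ℝ) (x : ℝ) : ℝ :=
  ∫ y, kfun a b x y ∂(typeLaw ν)

open MeasureTheory ProbabilityTheory Filter Topology

section ConditionalLaw

variable {Ω ι α β : Type*} [Fintype ι] [MeasurableSpace Ω] [MeasurableSpace α]
  [MeasurableSpace β] [MeasurableSingletonClass β]

theorem map_cond_eq_pi_of_iIndepFun {P : Measure Ω} {Y : ι → Ω → α} {Z : ι → Ω → β}
    (hY : ∀ j, Measurable (Y j)) (hindep : iIndepFun (fun j ω => (Y j ω, Z j ω)) P)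
    {ρ : Measure α} [IsFiniteMeasure ρ] [NeZero ρ] (z : β)
    (hlaw : ∀ j B, MeasurableSet B → P {ω | Y j ω ∈ B ∧ Z j ω = z} = ρ B) :
    (P[|{ω | ∀ j, Z j ω = z}]).map (fun ω j => Y j ω)
      = Measure.pi fun _ => (ρ Set.univ)⁻¹ • ρ := by
  have hjoint : ∀ s : ι → Set α, (∀ j, MeasurableSet (s j)) →
      P ({ω | ∀ j, Z j ω = z} ∩ (fun ω j => Y j ω) ⁻¹' Set.univ.pi s) = ∏ j, ρ (s j) := by
    intro s hs
    have hset : {ω | ∀ j, Z j ω = z} ∩ (fun ω j => Y j ω) ⁻¹' Set.univ.pi s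
        = ⋂ j, (fun ω => (Y j ω, Z j ω)) ⁻¹' (s j ×ˢ {z}) := by
      ext ω
      simp only [Set.mem_inter_iff, Set.mem_ofPred_eq, Set.mem_preimage, Set.mem_univ_pi,
        Set.mem_iInter, Set.mem_prod, Set.mem_singleton_iff]
      exact ⟨fun h j => ⟨h.2 j, h.1 j⟩, fun h => ⟨fun j => (h j).2, fun j => (h j).1⟩⟩
    rw [hset, hindep.meas_iInter fun j => ⟨_, (hs j).prod (measurableSet_singleton z), rfl⟩]
    exact Finset.prod_congr rfl fun j _ => hlaw j (s j) (hs j)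
  have hE : P {ω | ∀ j, Z j ω = z} = ρ Set.univ ^ Fintype.card ι := by
    simpa using hjoint (fun _ => Set.univ) fun _ => MeasurableSet.univ
  have hYmeas : Measurable fun ω j => Y j ω := measurable_pi_lambda _ hY
  refine (Measure.pi_eq fun s hs => ?_).symm
  rw [Measure.map_apply hYmeas (.univ_pi hs), cond_apply' (hYmeas (.univ_pi hs)), hjoint s hs,
    hE, ENNReal.inv_pow]
  simp only [Measure.smul_apply, smul_eq_mul, Finset.prod_mul_distrib, Finset.prod_const,
    Finset.card_univ]

end ConditionalLaw

section Normalization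

variable {α : Type*} [MeasurableSpace α] {μ ρ : Measure α} [IsProbabilityMeasure μ] {δ : ℝ}

lemma neZero_of_ofReal_smul_le (hδ : 0 < δ) (hlow : ENNReal.ofReal δ • μ ≤ ρ) : NeZero ρ :=
  ⟨fun h => (not_le.mpr hδ) (by simpa [h] using hlow Set.univ)⟩

lemma toReal_sub_toReal_normalize_le (hδ : 0 < δ) (hlow : ENNReal.ofReal δ • μ ≤ ρ)
    (hup : ρ ≤ μ) (B : Set α) :
    (μ B).toReal - (((ρ Set.univ)⁻¹ • ρ) B).toReal ≤ 1 - δ := by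
  have : IsFiniteMeasure ρ := isFiniteMeasure_of_le μ hup
  have : NeZero ρ := neZero_of_ofReal_smul_le hδ hlow
  have hρ₁ : ρ Set.univ ≤ 1 := (hup Set.univ).trans prob_le_one
  have hδ₁ : δ ≤ 1 := by
    have := (hlow Set.univ).trans hρ₁
    rwa [Measure.smul_apply, measure_univ, smul_eq_mul, mul_one, ENNReal.ofReal_le_one] at this
  have hB : ENNReal.ofReal δ * μ B ≤ ((ρ Set.univ)⁻¹ • ρ) B :=
    calc ENNReal.ofReal δ * μ B ≤ ρ B := hlow B
      _ ≤ (ρ Set.univ)⁻¹ * ρ B := le_mul_of_one_le_left' (ENNReal.one_le_inv.mpr hρ₁)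
  have hB' := ENNReal.toReal_mono (measure_ne_top _ B) hB
  rw [ENNReal.toReal_mul, ENNReal.toReal_ofReal hδ.le] at hB'
  have hμB : (μ B).toReal ≤ 1 := by simpa using ENNReal.toReal_mono ENNReal.one_ne_top prob_le_one
  nlinarith [ENNReal.toReal_nonneg (a := μ B)]

lemma abs_toReal_normalize_sub_le (hδ : 0 < δ) (hlow : ENNReal.ofReal δ • μ ≤ ρ) (hup : ρ ≤ μ)
    {A : Set α} (hA : MeasurableSet A) :
    |(((ρ Set.univ)⁻¹ • ρ) A).toReal - (μ A).toReal| ≤ 1 - δ := by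
  have : IsFiniteMeasure ρ := isFiniteMeasure_of_le μ hup
  have : NeZero ρ := neZero_of_ofReal_smul_le hδ hlow
  have hAc := toReal_sub_toReal_normalize_le hδ hlow hup Aᶜ
  rw [← measureReal_def, ← measureReal_def, probReal_compl_eq_one_sub hA,
    probReal_compl_eq_one_sub hA, measureReal_def, measureReal_def] at hAc
  rw [abs_sub_le_iff]
  exact ⟨by linarith, toReal_sub_toReal_normalize_le hδ hlow hup A⟩

end Normalization

section Kernel

variable {a b φmax : ℝ}

lemma kfun_nonneg (ha : 0 ≤ a) (hb : 0 ≤ b) (x y : ℝ) : 0 ≤ kfun a b x y :=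
  mul_nonneg (abs_nonneg _) (by split_ifs <;> assumption)

lemma kfunMax_nonneg (ha : 0 ≤ a) : 0 ≤ kfunMax a b φmax :=
  mul_nonneg (le_max_of_le_left ha) (sq_nonneg _)

lemma kfun_le_kfunMax (ha : 0 ≤ a) (hb : 0 ≤ b) {x y : ℝ} (hx : |x| ≤ φmax) (hy : |y| ≤ φmax) :
    kfun a b x y ≤ kfunMax a b φmax := by
  have hxy : |x * y| ≤ φmax ^ 2 := by
    rw [abs_mul, sq]
    exact mul_le_mul hx hy (abs_nonneg _) ((abs_nonneg _).trans hx)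
  have hab : (if 0 < x * y then a else b) ≤ max a b := by
    split_ifs
    exacts [le_max_left _ _, le_max_right _ _]
  rw [kfun, kfunMax, mul_comm (max a b)]
  exact mul_le_mul hxy hab (by split_ifs <;> assumption) (sq_nonneg _)

def noEdgeProb (a b : ℝ) (n m : ℕ) (x : Fin m → ℝ) (y : ℝ) : ℝ :=
  ∏ i, (1 - kfun a b (x i) y / n)

variable {n m : ℕ} {x : Fin m → ℝ} {y : ℝ}

lemma one_sub_kfun_div_mem_Icc (ha : 0 ≤ a) (hb : 0 ≤ b) {x : ℝ} (hx : |x| ≤ φmax)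
    (hy : |y| ≤ φmax) : 1 - kfun a b x y / n ∈ Set.Icc (1 - kfunMax a b φmax / n) 1 :=
  ⟨by gcongr; exact kfun_le_kfunMax ha hb hx hy,
    sub_le_self _ (div_nonneg (kfun_nonneg ha hb x y) n.cast_nonneg)⟩

lemma pow_le_noEdgeProb (ha : 0 ≤ a) (hb : 0 ≤ b) (hn : kfunMax a b φmax ≤ n)
    (hx : ∀ i, |x i| ≤ φmax) (hy : |y| ≤ φmax) :
    (1 - kfunMax a b φmax / n) ^ m ≤ noEdgeProb a b n m x y := by
  have h₀ : 0 ≤ 1 - kfunMax a b φmax / n :=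
    sub_nonneg.mpr (div_le_one_of_le₀ hn n.cast_nonneg)
  calc (1 - kfunMax a b φmax / n) ^ m = ∏ _i : Fin m, (1 - kfunMax a b φmax / n) := by simp
    _ ≤ noEdgeProb a b n m x y :=
      Finset.prod_le_prod (fun _ _ => h₀) fun i _ => (one_sub_kfun_div_mem_Icc ha hb (hx i) hy).1

lemma noEdgeProb_le_one (ha : 0 ≤ a) (hb : 0 ≤ b) (hn : kfunMax a b φmax ≤ n)
    (hx : ∀ i, |x i| ≤ φmax) (hy : |y| ≤ φmax) : noEdgeProb a b n m x y ≤ 1 := by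
  have h₀ : 0 ≤ 1 - kfunMax a b φmax / n :=
    sub_nonneg.mpr (div_le_one_of_le₀ hn n.cast_nonneg)
  exact Finset.prod_le_one (fun i _ => h₀.trans (one_sub_kfun_div_mem_Icc ha hb (hx i) hy).1)
    fun i _ => (one_sub_kfun_div_mem_Icc ha hb (hx i) hy).2

end Kernel

instance isProbabilityMeasure_typeLaw (ν : Measure ℝ) [IsProbabilityMeasure ν] :
    IsProbabilityMeasure (typeLaw ν) := by
  constructor
  simp [typeLaw, Measure.map_apply measurable_neg MeasurableSet.univ, ENNReal.inv_two_add_inv_two]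

lemma ae_abs_le_typeLaw {ν : Measure ℝ} {r : ℝ} (h : ∀ᵐ x ∂ν, |x| ≤ r) :
    ∀ᵐ y ∂typeLaw ν, |y| ≤ r := by
  refine Measure.ae_smul_measure (ae_add_measure_iff.mpr ⟨?_, h⟩) _
  exact (MeasurableEquiv.neg ℝ).measurableEmbedding.ae_map_iff.mpr (by simpa using h)

section Explored

variable {a b φmax : ℝ} {n m : ℕ} {x : Fin m → ℝ}

lemma one_sub_kfunMax_div_pos (ha : 0 ≤ a) (hn : kfunMax a b φmax < n) :
    0 < 1 - kfunMax a b φmax / n :=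
  sub_pos.mpr ((div_lt_one ((kfunMax_nonneg ha).trans_lt hn)).mpr hn)

variable {μ : Measure ℝ}

lemma ofReal_smul_le_withDensity_noEdgeProb (ha : 0 ≤ a) (hb : 0 ≤ b)
    (hn : kfunMax a b φmax ≤ n) (hx : ∀ i, |x i| ≤ φmax) (hμ : ∀ᵐ y ∂μ, |y| ≤ φmax) :
    ENNReal.ofReal ((1 - kfunMax a b φmax / n) ^ m) • μ
      ≤ μ.withDensity fun y => ENNReal.ofReal (noEdgeProb a b n m x y) := by
  rw [← withDensity_const]
  exact withDensity_mono (hμ.mono fun y hy =>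
    ENNReal.ofReal_le_ofReal (pow_le_noEdgeProb ha hb hn hx hy))

lemma withDensity_noEdgeProb_le (ha : 0 ≤ a) (hb : 0 ≤ b) (hn : kfunMax a b φmax ≤ n)
    (hx : ∀ i, |x i| ≤ φmax) (hμ : ∀ᵐ y ∂μ, |y| ≤ φmax) :
    μ.withDensity (fun y => ENNReal.ofReal (noEdgeProb a b n m x y)) ≤ μ := by
  conv_rhs => rw [← withDensity_one (μ := μ)]
  exact withDensity_mono (hμ.mono fun y hy =>
    ENNReal.ofReal_le_one.mpr (noEdgeProb_le_one ha hb hn hx hy))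

lemma abs_muExplored_sub_typeLaw_le {ν : Measure ℝ} [IsProbabilityMeasure ν] (ha : 0 ≤ a)
    (hb : 0 ≤ b) (hν : ∀ᵐ y ∂typeLaw ν, |y| ≤ φmax) (hn : kfunMax a b φmax < n)
    (hx : ∀ i, |x i| ≤ φmax) {A : Set ℝ} (hA : MeasurableSet A) :
    |(muExplored a b ν n m x A).toReal - (typeLaw ν A).toReal|
      ≤ kfunMax a b φmax * m / n := by
  have hc := one_sub_kfunMax_div_pos (b := b) ha hn
  have hBernoulli := one_add_mul_le_pow (a := -(kfunMax a b φmax / n)) (by linarith) m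
  calc _ ≤ 1 - (1 - kfunMax a b φmax / n) ^ m :=
        abs_toReal_normalize_sub_le (pow_pos hc m)
          (ofReal_smul_le_withDensity_noEdgeProb ha hb hn.le hx hν)
          (withDensity_noEdgeProb_le ha hb hn.le hx hν) hA
    _ ≤ kfunMax a b φmax * m / n := by
        rw [← sub_eq_add_neg] at hBernoulli
        rw [mul_div_right_comm]
        linarith

end Explored

theorem stmt7_general
    (a b φmin φmax : ℝ) (ha : 0 < a) (hb : 0 < b)
    (hφmin : 0 < φmin)
    (ν : Measure ℝ) (hν : IsProbabilityMeasure ν)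
    (hsupp : ∀ᵐ x ∂ν, x ∈ Set.Icc φmin φmax)
    (n m k : ℕ) (hkn : kfunMax a b φmax < n)
    (x : Fin m → ℝ) (hx : ∀ i, |x i| ∈ Set.Icc φmin φmax)
    (Ω : Type) [MeasurableSpace Ω] (P : Measure Ω)
    (Y : Fin k → Ω → ℝ) (e : Fin k → Fin m → Ω → Bool)
    (hYmeas : ∀ j, Measurable (Y j))
    (hindep : iIndepFun (β := fun _ : Fin k => ℝ × (Fin m → Bool)) (m := fun _ => inferInstance)
      (fun j ω => (Y j ω, fun i => e j i ω)) P)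
    (hlaw : ∀ j : Fin k, ∀ B : Set ℝ, MeasurableSet B → ∀ gv : Fin m → Bool,
      P {ω | Y j ω ∈ B ∧ (fun i => e j i ω) = gv}
        = ∫⁻ y in B, ENNReal.ofReal (∏ i : Fin m,
            if gv i = true then kfun a b (x i) y / n else 1 - kfun a b (x i) y / n)
            ∂(typeLaw ν)) :
    -- conditionally on having no edge to the explored set, the types are i.i.d. `μ^{(m)}`
    Measure.map (fun ω (j : Fin k) => Y j ω)
        (P[|{ω | ∀ (j : Fin k) (i : Fin m), e j i ω = false}])
      = Measure.pi (fun _ : Fin k => muExplored a b ν n m x) ∧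
    -- total variation bound, uniformly in the explored types, for `n` large given `m`
    (∀ m' : ℕ, ∃ N : ℕ, ∀ n' : ℕ, N ≤ n' →
      ∀ x' : Fin m' → ℝ, (∀ i, |x' i| ∈ Set.Icc φmin φmax) →
      ∀ A : Set ℝ, MeasurableSet A →
        |(muExplored a b ν n' m' x' A).toReal - (typeLaw ν A).toReal|
          ≤ 2 * kfunMax a b φmax * m' / n') := by
  have hμ : ∀ᵐ y ∂typeLaw ν, |y| ≤ φmax := ae_abs_le_typeLaw <| hsupp.mono fun y hy => by
    rw [abs_of_pos (hφmin.trans_le hy.1)]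
    exact hy.2
  refine ⟨?_, fun m' => ⟨⌊kfunMax a b φmax⌋₊ + 1, fun n' hn' x' hx' A hA => ?_⟩⟩
  · set ρ := (typeLaw ν).withDensity fun y => ENNReal.ofReal (noEdgeProb a b n m x y)
    have : IsFiniteMeasure ρ := isFiniteMeasure_of_le _
      (withDensity_noEdgeProb_le ha.le hb.le hkn.le (fun i => (hx i).2) hμ)
    have : NeZero ρ := neZero_of_ofReal_smul_le (pow_pos (one_sub_kfunMax_div_pos ha.le hkn) m)
      (ofReal_smul_le_withDensity_noEdgeProb ha.le hb.le hkn.le (fun i => (hx i).2) hμ)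
    have hE : {ω | ∀ (j : Fin k) (i : Fin m), e j i ω = false}
        = {ω | ∀ j, (fun i => e j i ω) = fun _ => false} := by
      simp only [funext_iff]
    rw [hE]
    exact map_cond_eq_pi_of_iIndepFun (ρ := ρ) hYmeas hindep _ fun j B hB => by
      rw [hlaw j B hB, withDensity_apply _ hB]
      simp [noEdgeProb]
  · have hn'K : kfunMax a b φmax < n' := (Nat.lt_floor_add_one _).trans_le (mod_cast hn')
    calc _ ≤ kfunMax a b φmax * m' / n' :=
          abs_muExplored_sub_typeLaw_le ha.le hb.le hμ hn'K (fun i => (hx' i).2) hA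
      _ ≤ 2 * kfunMax a b φmax * m' / n' := by
          have := kfunMax_nonneg (b := b) (φmax := φmax) ha.le
          gcongr
          nlinarith [(m'.cast_nonneg : (0 : ℝ) ≤ m')]

/-- **The unexplored types are i.i.d. with law `μ^{(m)}`, which is close to `μ`.**
In the exploration process of the DC-PPM, condition on the first `m` explored vertices having
types `x_1, …, x_m`.  The remaining vertices have i.i.d. types with law `μ` and are joined to
each explored vertex `i` independently with conditional probability `κ(x_i, ·)/n`; the
unexplored vertices `U(m)` are exactly those with no edge to the explored set.  Conditionally
on this event, their types are i.i.d. with law `μ^{(m)}` where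
`dμ^{(m)}(y) = ∏_{i=1}^m (1-κ(x_i,y)/n) dμ(y) / ∫ ∏_{i=1}^m (1-κ(x_i,z)/n) dμ(z)`.
Moreover (regime `m = o(n)`): for every `m` there is `N_m` such that for all `n ≥ N_m` and all
types `(x_1,…,x_m)`, the total variation distance between `μ^{(m)}` and `μ` is at most
`2·κ_max·m/n`. -/
theorem stmt7
    (a b φmin φmax : ℝ) (ha : 0 < a) (hb : 0 < b)
    (hφmin : 0 < φmin) (hφ : φmin ≤ φmax)
    (ν : Measure ℝ) (hν : IsProbabilityMeasure ν)
    (hsupp : ∀ᵐ x ∂ν, x ∈ Set.Icc φmin φmax)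
    (n m k : ℕ) (hkn : kfunMax a b φmax < n)
    (x : Fin m → ℝ) (hx : ∀ i, |x i| ∈ Set.Icc φmin φmax)
    (Ω : Type) [MeasurableSpace Ω] (P : Measure Ω) (hP : IsProbabilityMeasure P)
    (Y : Fin k → Ω → ℝ) (e : Fin k → Fin m → Ω → Bool)
    (hYmeas : ∀ j, Measurable (Y j)) (hemeas : ∀ j i, Measurable (e j i))
    (hindep : iIndepFun (β := fun _ : Fin k => ℝ × (Fin m → Bool)) (m := fun _ => inferInstance)
      (fun j ω => (Y j ω, fun i => e j i ω)) P)
    (hlaw : ∀ j : Fin k, ∀ B : Set ℝ, MeasurableSet B → ∀ gv : Fin m → Bool,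
      P {ω | Y j ω ∈ B ∧ (fun i => e j i ω) = gv}
        = ∫⁻ y in B, ENNReal.ofReal (∏ i : Fin m,
            if gv i = true then kfun a b (x i) y / n else 1 - kfun a b (x i) y / n)
            ∂(typeLaw ν)) :
    -- conditionally on having no edge to the explored set, the types are i.i.d. `μ^{(m)}`
    Measure.map (fun ω (j : Fin k) => Y j ω)
        (P[|{ω | ∀ (j : Fin k) (i : Fin m), e j i ω = false}])
      = Measure.pi (fun _ : Fin k => muExplored a b ν n m x) ∧
    -- total variation bound, uniformly in the explored types, for `n` large given `m`
    (∀ m' : ℕ, ∃ N : ℕ, ∀ n' : ℕ, N ≤ n' →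
      ∀ x' : Fin m' → ℝ, (∀ i, |x' i| ∈ Set.Icc φmin φmax) →
      ∀ A : Set ℝ, MeasurableSet A →
        |(muExplored a b ν n' m' x' A).toReal - (typeLaw ν A).toReal|
          ≤ 2 * kfunMax a b φmax * m' / n') :=
  stmt7_general a b φmin φmax ha hb hφmin ν hν hsupp n m k hkn x hx Ω P Y e hYmeas hindep hlaw
end
end

section
/- In the exploration process of the DC-PPM, suppose the vertex u currently being explored has type x, and let D be the number of neighbours u has in the unexplored set U(m). Then the total variation distance between the law of D and the Poisson law Poi(λ_x(S)) is at most κ_max·(n - |U(m)|)/n + 3κ_max²·(m/n) (up to an absolute constant coming from the Poisson comparison). -/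
noncomputable section

/-- One step of the exploration process of the DC-PPM: the vertex currently being explored has
type `xu`, the `m` already explored vertices have types `x`, and the `k` unexplored vertices
have i.i.d. types `Y_j` with law `μ^{(m)}` and are joined to the current vertex independently
with conditional probability `κ(x_u, ·)/n` (edge indicators `e_j`). -/
structure NbhdStep (a b φmin φmax : ℝ) (ν : MeasureTheory.Measure ℝ) (n m k : ℕ) where
  x : Fin m → ℝ
  hx : ∀ i, |x i| ∈ Set.Icc φmin φmax
  xu : ℝ
  hxu : |xu| ∈ Set.Icc φmin φmax
  Ω : Type
  [mΩ : MeasurableSpace Ω]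
  P : MeasureTheory.Measure Ω
  hP : MeasureTheory.IsProbabilityMeasure P
  Y : Fin k → Ω → ℝ
  e : Fin k → Ω → Bool
  meas_Y : ∀ j, Measurable (Y j)
  meas_e : ∀ j, Measurable (e j)
  indep : ProbabilityTheory.iIndepFun (β := fun _ : Fin k => ℝ × Bool)
    (fun j ω => (Y j ω, e j ω)) P
  Ylaw : ∀ j, MeasureTheory.Measure.map (Y j) P = muExplored a b ν n m x
  elaw : ∀ j : Fin k, ∀ B : Set ℝ, MeasurableSet B →
    P {ω | Y j ω ∈ B ∧ e j ω = true}
      = ∫⁻ y in B, ENNReal.ofReal (kfun a b xu y / n) ∂(muExplored a b ν n m x)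

open MeasureTheory ProbabilityTheory Filter Topology

namespace Stmt9


open Real Finset

def conv (f g : ℕ → ℝ) (d : ℕ) : ℝ := ∑ i ∈ Finset.range (d + 1), f i * g (d - i)

lemma poisson_hasSum (r : ℝ) : HasSum (_root_.poissonPMF r) 1 := by
  have h := NormedSpace.expSeries_div_hasSum_exp r
  rw [← Real.exp_eq_exp_ℝ] at h
  have h2 := h.mul_left (Real.exp (-r))
  have : Real.exp (-r) * Real.exp r = 1 := by
    rw [← Real.exp_add]; simp
  rw [this] at h2
  convert h2 using 2 with n
  · rfl
  simp [_root_.poissonPMF, mul_div_assoc]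

lemma poisson_summable (r : ℝ) : Summable (_root_.poissonPMF r) := (poisson_hasSum r).summable

lemma poisson_tsum (r : ℝ) : ∑' d, _root_.poissonPMF r d = 1 := (poisson_hasSum r).tsum_eq

lemma poisson_nonneg {r : ℝ} (hr : 0 ≤ r) (d : ℕ) : 0 ≤ _root_.poissonPMF r d := by
  unfold _root_.poissonPMF; positivity

lemma conv_poisson (r s : ℝ) (d : ℕ) :
    conv (_root_.poissonPMF r) (_root_.poissonPMF s) d = _root_.poissonPMF (r + s) d := by
  unfold conv _root_.poissonPMF
  rw [neg_add, Real.exp_add, add_pow, Finset.mul_sum, Finset.sum_div]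
  refine Finset.sum_congr rfl fun i hi => ?_
  have hid : i ≤ d := Nat.lt_succ_iff.mp (Finset.mem_range.mp hi)
  have key : (d.choose i : ℝ) * (Nat.factorial i) * (Nat.factorial (d - i)) =
      (Nat.factorial d) := by
    exact_mod_cast Nat.choose_mul_factorial_mul_factorial hid
  have h1 : (Nat.factorial i : ℝ) ≠ 0 := Nat.cast_ne_zero.mpr (Nat.factorial_ne_zero i)
  have h2 : (Nat.factorial (d - i) : ℝ) ≠ 0 := Nat.cast_ne_zero.mpr (Nat.factorial_ne_zero _)
  have h3 : (Nat.factorial d : ℝ) ≠ 0 := Nat.cast_ne_zero.mpr (Nat.factorial_ne_zero _)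
  field_simp
  ring_nf
  rw [← key]
  ring

lemma conv_comm (f g : ℕ → ℝ) (d : ℕ) : conv f g d = conv g f d := by
  unfold conv
  rw [← Finset.sum_range_reflect]
  refine Finset.sum_congr rfl fun i hi => ?_
  have hid : i ≤ d := Nat.lt_succ_iff.mp (Finset.mem_range.mp hi)
  have : d + 1 - 1 - i = d - i := by omega
  rw [this]
  have : d - (d - i) = i := by omega
  rw [this, mul_comm]

lemma tsum_conv {f g : ℕ → ℝ} (hf : ∀ d, 0 ≤ f d) (hg : ∀ d, 0 ≤ g d)
    (hsf : Summable f) (hsg : Summable g) :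
    Summable (fun d => conv f g d) ∧ ∑' d, conv f g d = (∑' d, f d) * (∑' d, g d) := by
  have hf' : Summable (fun n => ‖f n‖) := by
    simpa [Real.norm_eq_abs, abs_of_nonneg (hf _)] using hsf
  have hg' : Summable (fun n => ‖g n‖) := by
    simpa [Real.norm_eq_abs, abs_of_nonneg (hg _)] using hsg
  constructor
  · exact (summable_norm_sum_mul_range_of_summable_norm hf' hg').of_norm
  · exact (tsum_mul_tsum_eq_tsum_sum_range_of_summable_norm hf' hg').symm

lemma l1_conv_right (f g1 g2 : ℕ → ℝ) (hf0 : ∀ d, 0 ≤ f d) (hf : Summable f)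
    (hg : Summable (fun d => |g1 d - g2 d|)) :
    Summable (fun d => |conv f g1 d - conv f g2 d|) ∧
    ∑' d, |conv f g1 d - conv f g2 d| ≤ (∑' d, f d) * ∑' d, |g1 d - g2 d| := by
  have key : ∀ d, |conv f g1 d - conv f g2 d| ≤ conv f (fun j => |g1 j - g2 j|) d := by
    intro d
    have h : conv f g1 d - conv f g2 d
        = ∑ i ∈ Finset.range (d+1), f i * (g1 (d-i) - g2 (d-i)) := by
      simp [conv, ← Finset.sum_sub_distrib, mul_sub]
    rw [h]
    refine (Finset.abs_sum_le_sum_abs _ _).trans ?_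
    refine Finset.sum_le_sum fun i _ => ?_
    rw [abs_mul, abs_of_nonneg (hf0 i)]
  obtain ⟨hs, heq⟩ := tsum_conv hf0 (fun d => abs_nonneg _) hf hg
  have hsum : Summable fun d => |conv f g1 d - conv f g2 d| :=
    Summable.of_nonneg_of_le (fun d => abs_nonneg _) key hs
  exact ⟨hsum, (Summable.tsum_le_tsum key hsum hs).trans_eq heq⟩


def bern (p : ℝ) (d : ℕ) : ℝ := if d = 0 then 1 - p else if d = 1 then p else 0

def binom (p : ℝ) (k d : ℕ) : ℝ := (k.choose d) * p ^ d * (1 - p) ^ (k - d)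

def delta0 (d : ℕ) : ℝ := if d = 0 then 1 else 0

lemma bern_nonneg {p : ℝ} (h0 : 0 ≤ p) (h1 : p ≤ 1) (d : ℕ) : 0 ≤ bern p d := by
  unfold bern; split_ifs <;> linarith

lemma bern_summable (p : ℝ) : Summable (bern p) := by
  apply summable_of_ne_finset_zero (s := Finset.range 2)
  intro d hd
  simp only [Finset.mem_range, not_lt] at hd
  unfold bern
  rw [if_neg (by omega), if_neg (by omega)]

lemma bern_tsum (p : ℝ) : ∑' d, bern p d = 1 := by
  rw [tsum_eq_sum (s := Finset.range 2)]
  · simp [Finset.sum_range_succ, bern]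
  · intro d hd
    simp only [Finset.mem_range, not_lt] at hd
    unfold bern
    rw [if_neg (by omega), if_neg (by omega)]

lemma binom_nonneg {p : ℝ} (h0 : 0 ≤ p) (h1 : p ≤ 1) (k d : ℕ) : 0 ≤ binom p k d := by
  unfold binom
  have : (0:ℝ) ≤ 1 - p := by linarith
  positivity

lemma binom_eq_zero {p : ℝ} {k d : ℕ} (h : k < d) : binom p k d = 0 := by
  unfold binom
  rw [Nat.choose_eq_zero_of_lt h]
  simp

lemma binom_summable (p : ℝ) (k : ℕ) : Summable (binom p k) := by
  apply summable_of_ne_finset_zero (s := Finset.range (k+1))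
  intro d hd
  simp only [Finset.mem_range, not_lt] at hd
  exact binom_eq_zero (by omega)

lemma binom_zero (p : ℝ) (d : ℕ) : binom p 0 d = delta0 d := by
  unfold binom delta0
  cases d with
  | zero => simp
  | succ j => simp [Nat.choose]

lemma binom_succ (p : ℝ) (k : ℕ) (d : ℕ) :
    binom p (k+1) d = conv (binom p k) (bern p) d := by
  cases d with
  | zero =>
    simp [conv, binom, bern]
    ring
  | succ j =>
    have h : conv (binom p k) (bern p) (j+1)
        = binom p k (j+1) * (1 - p) + binom p k j * p := by
      unfold conv
      rw [Finset.sum_range_succ, Finset.sum_range_succ]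
      have hz : ∑ i ∈ Finset.range j, binom p k i * bern p (j + 1 - i) = 0 := by
        refine Finset.sum_eq_zero fun i hi => ?_
        have : i < j := Finset.mem_range.mp hi
        have h1 : j + 1 - i ≠ 0 := by omega
        have h2 : j + 1 - i ≠ 1 := by omega
        rw [bern, if_neg h1, if_neg h2, mul_zero]
      rw [hz, zero_add]
      have e1 : j + 1 - j = 1 := by omega
      have e2 : j + 1 - (j + 1) = 0 := by omega
      rw [e1, e2]
      simp [bern]
      ring
    rw [h]
    rcases lt_trichotomy j k with hlt | heq | hgt
    · unfold binom
      have c1 : (k+1) - (j+1) = (k - (j+1)) + 1 := by omega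
      have c2 : k - j = (k - (j+1)) + 1 := by omega
      rw [c1, c2, Nat.choose_succ_succ]
      push_cast
      ring
    · subst heq
      unfold binom
      have e1 : j + 1 - (j+1) = 0 := by omega
      have e2 : j - j = 0 := by omega
      rw [Nat.choose_self, e1, e2, Nat.choose_eq_zero_of_lt (Nat.lt_succ_self j),
        Nat.choose_self]
      push_cast
      ring
    · rw [binom_eq_zero (by omega), binom_eq_zero (by omega), binom_eq_zero (by omega)]
      ring

lemma conv_delta0 (f : ℕ → ℝ) (d : ℕ) : conv f delta0 d = f d := by
  unfold conv
  rw [Finset.sum_eq_single_of_mem d (Finset.self_mem_range_succ d)]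
  · simp [delta0]
  · intro i hi hne
    have hid : i ≤ d := Nat.lt_succ_iff.mp (Finset.mem_range.mp hi)
    have : d - i ≠ 0 := by omega
    rw [delta0, if_neg this, mul_zero]


lemma delta0_summable : Summable delta0 := by
  apply summable_of_ne_finset_zero (s := Finset.range 1)
  intro d hd
  simp only [Finset.mem_range, not_lt] at hd
  rw [delta0, if_neg (by omega)]

lemma l1_summable_of_pmfs {f g : ℕ → ℝ} (hf0 : ∀ d, 0 ≤ f d) (hg0 : ∀ d, 0 ≤ g d)
    (hf : Summable f) (hg : Summable g) : Summable (fun d => |f d - g d|) := by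
  refine Summable.of_nonneg_of_le (fun d => abs_nonneg _) (fun d => ?_) (hf.add hg)
  calc |f d - g d| ≤ |f d| + |g d| := abs_sub _ _
  _ = f d + g d := by rw [abs_of_nonneg (hf0 d), abs_of_nonneg (hg0 d)]

lemma one_sub_exp_neg_le {p : ℝ} (hp : 0 ≤ p) : 1 - Real.exp (-p) ≤ p := by
  have := Real.add_one_le_exp (-p)
  linarith

lemma l1_delta0_poisson {p : ℝ} (hp : 0 ≤ p) :
    ∑' d, |delta0 d - _root_.poissonPMF p d| ≤ 2 * p := by
  have hS : Summable (fun d => |delta0 d - _root_.poissonPMF p d|) :=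
    l1_summable_of_pmfs (fun d => by unfold delta0; split_ifs <;> norm_num)
      (poisson_nonneg hp) delta0_summable (poisson_summable p)
  rw [Summable.tsum_eq_zero_add hS]
  have hA : Real.exp (-p) ≤ 1 := by
    rw [Real.exp_le_one_iff]; linarith
  have h0 : |delta0 0 - _root_.poissonPMF p 0| = 1 - Real.exp (-p) := by
    have h0eq : delta0 0 - _root_.poissonPMF p 0 = 1 - Real.exp (-p) := by
      simp [delta0, _root_.poissonPMF]
    rw [h0eq, abs_of_nonneg (by linarith [Real.exp_le_one_iff.mpr (by linarith : -p ≤ 0)])]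
  have h1 : ∀ d : ℕ, |delta0 (d+1) - _root_.poissonPMF p (d+1)| = _root_.poissonPMF p (d+1) := by
    intro d
    rw [delta0, if_neg (by omega)]
    rw [zero_sub, abs_neg, abs_of_nonneg (poisson_nonneg hp _)]
  have htail : ∑' d, |delta0 (d+1) - _root_.poissonPMF p (d+1)| = 1 - Real.exp (-p) := by
    have := Summable.tsum_eq_zero_add (poisson_summable p)
    rw [poisson_tsum p] at this
    have h2 : ∑' d, _root_.poissonPMF p (d+1) = 1 - _root_.poissonPMF p 0 := by linarith
    calc ∑' d, |delta0 (d+1) - _root_.poissonPMF p (d+1)| = ∑' d, _root_.poissonPMF p (d+1) := by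
          exact tsum_congr h1
    _ = 1 - _root_.poissonPMF p 0 := h2
    _ = 1 - Real.exp (-p) := by simp [_root_.poissonPMF]
  rw [h0, htail]
  have := one_sub_exp_neg_le hp
  linarith

lemma l1_poisson_shift {r s : ℝ} (hr : 0 ≤ r) (hrs : r ≤ s) :
    ∑' d, |_root_.poissonPMF r d - _root_.poissonPMF s d| ≤ 2 * (s - r) := by
  have hd : 0 ≤ s - r := by linarith
  have hpoint : ∀ d, |_root_.poissonPMF r d - _root_.poissonPMF s d|
      = |conv (_root_.poissonPMF r) delta0 d - conv (_root_.poissonPMF r) (_root_.poissonPMF (s - r)) d| := by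
    intro d
    have hrs' : r + (s - r) = s := by ring
    rw [conv_delta0, conv_poisson, hrs']
  have hgsum : Summable (fun d => |delta0 d - _root_.poissonPMF (s - r) d|) :=
    l1_summable_of_pmfs (fun d => by unfold delta0; split_ifs <;> norm_num)
      (poisson_nonneg hd) delta0_summable (poisson_summable _)
  obtain ⟨hs1, hs2⟩ := l1_conv_right (_root_.poissonPMF r) delta0 (_root_.poissonPMF (s - r))
    (poisson_nonneg hr) (poisson_summable r) hgsum
  calc ∑' d, |_root_.poissonPMF r d - _root_.poissonPMF s d|
      = ∑' d, |conv (_root_.poissonPMF r) delta0 d - conv (_root_.poissonPMF r) (_root_.poissonPMF (s - r)) d| :=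
        tsum_congr hpoint
  _ ≤ (∑' d, _root_.poissonPMF r d) * ∑' d, |delta0 d - _root_.poissonPMF (s - r) d| := hs2
  _ ≤ 1 * (2 * (s - r)) := by
      rw [poisson_tsum, one_mul]
      have := l1_delta0_poisson hd
      linarith
  _ = 2 * (s - r) := by ring

lemma l1_poisson_poisson {r s : ℝ} (hr : 0 ≤ r) (hs : 0 ≤ s) :
    ∑' d, |_root_.poissonPMF r d - _root_.poissonPMF s d| ≤ 2 * |r - s| := by
  rcases le_total r s with h | h
  · have := l1_poisson_shift hr h
    rw [abs_of_nonpos (by linarith)]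
    linarith
  · have := l1_poisson_shift hs h
    rw [abs_of_nonneg (by linarith)]
    calc ∑' d, |_root_.poissonPMF r d - _root_.poissonPMF s d| = ∑' d, |_root_.poissonPMF s d - _root_.poissonPMF r d| := by
          refine tsum_congr fun d => ?_; rw [abs_sub_comm]
    _ ≤ 2 * (r - s) := this

set_option maxHeartbeats 1000000 in
lemma l1_bern_poisson {p : ℝ} (h0 : 0 ≤ p) (h1 : p ≤ 1) :
    ∑' d, |bern p d - _root_.poissonPMF p d| ≤ 3 * p ^ 2 := by
  set A := Real.exp (-p) with hA
  have hA1 : 1 - p ≤ A := by have := Real.add_one_le_exp (-p); linarith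
  have hAle : A ≤ 1 := by rw [hA, Real.exp_le_one_iff]; linarith
  have hA0 : 0 < A := Real.exp_pos _
  have hAp : A * (1 + p) ≤ 1 := by
    have h := Real.add_one_le_exp p
    have : A * (1 + p) ≤ A * Real.exp p := by
      apply mul_le_mul_of_nonneg_left _ (le_of_lt hA0)
      linarith
    rw [hA, ← Real.exp_add] at this
    simpa using this
  have hS : Summable (fun d => |bern p d - _root_.poissonPMF p d|) :=
    l1_summable_of_pmfs (bern_nonneg h0 h1) (poisson_nonneg h0)
      (bern_summable p) (poisson_summable p)
  rw [Summable.tsum_eq_zero_add hS, Summable.tsum_eq_zero_add (by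
    exact (summable_nat_add_iff 1).mpr hS)]
  have e0 : |bern p 0 - _root_.poissonPMF p 0| = A - (1 - p) := by
    simp only [bern, if_pos rfl, _root_.poissonPMF]
    norm_num
    rw [abs_sub_comm, abs_of_nonneg (by linarith)]
  have e1 : |bern p (0+1) - _root_.poissonPMF p (0+1)| = p - p * A := by
    simp only [bern, _root_.poissonPMF]
    norm_num
    rw [abs_of_nonneg]
    · ring
    · nlinarith
  have etail : ∑' d, |bern p (d + 1 + 1) - _root_.poissonPMF p (d + 1 + 1)| = 1 - A - p * A := by
    have hcong : ∀ d : ℕ, |bern p (d + 1 + 1) - _root_.poissonPMF p (d + 1 + 1)|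
        = _root_.poissonPMF p (d + 1 + 1) := by
      intro d
      rw [bern, if_neg (by omega), if_neg (by omega), zero_sub, abs_neg,
        abs_of_nonneg (poisson_nonneg h0 _)]
    rw [tsum_congr hcong]
    have hps := poisson_summable p
    have t1 := Summable.tsum_eq_zero_add hps
    have t2 := Summable.tsum_eq_zero_add ((summable_nat_add_iff 1).mpr hps)
    rw [poisson_tsum p] at t1
    have ep0 : _root_.poissonPMF p 0 = A := by simp [_root_.poissonPMF, hA]
    have ep1 : _root_.poissonPMF p (0+1) = p * A := by simp [_root_.poissonPMF, hA]; ring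
    rw [t2, ep1] at t1
    rw [ep0] at t1
    linarith
  rw [e0, e1, etail]
  have i1 : A - (1 - p) ≤ p ^ 2 := by nlinarith
  have i2 : p - p * A ≤ p ^ 2 := by nlinarith
  have i3 : 1 - A - p * A ≤ p ^ 2 := by nlinarith
  linarith

lemma l1_binom_poisson {p : ℝ} (h0 : 0 ≤ p) (h1 : p ≤ 1) (k : ℕ) :
    ∑' d, |binom p k d - _root_.poissonPMF (k * p) d| ≤ 3 * k * p ^ 2 := by
  induction k with
  | zero =>
    have : ∀ d, |binom p 0 d - _root_.poissonPMF ((0:ℕ) * p) d| = 0 := by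
      intro d
      rw [binom_zero]
      have : _root_.poissonPMF ((0:ℕ) * p) d = delta0 d := by
        simp only [Nat.cast_zero, zero_mul, _root_.poissonPMF, delta0]
        cases d with
        | zero => simp
        | succ j => simp
      rw [this, sub_self, abs_zero]
    rw [tsum_congr this]
    simp
  | succ k ih =>
    have hb0 := bern_nonneg h0 h1
    have hkp : (0:ℝ) ≤ k * p := by positivity
    have hbinsum : Summable (fun d => |binom p k d - _root_.poissonPMF (k * p) d|) :=
      l1_summable_of_pmfs (binom_nonneg h0 h1 k) (poisson_nonneg hkp)
        (binom_summable p k) (poisson_summable _)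
    have hbpsum : Summable (fun d => |bern p d - _root_.poissonPMF p d|) :=
      l1_summable_of_pmfs hb0 (poisson_nonneg h0) (bern_summable p) (poisson_summable p)
    obtain ⟨hc1, hc2⟩ := l1_conv_right (bern p) (binom p k) (_root_.poissonPMF (k * p))
      hb0 (bern_summable p) hbinsum
    obtain ⟨hd1, hd2⟩ := l1_conv_right (_root_.poissonPMF (k * p)) (bern p) (_root_.poissonPMF p)
      (poisson_nonneg hkp) (poisson_summable _) hbpsum
    have tri : ∀ d, |binom p (k+1) d - _root_.poissonPMF ((k+1 : ℕ) * p) d|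
        ≤ |conv (bern p) (binom p k) d - conv (bern p) (_root_.poissonPMF (k * p)) d|
          + |conv (_root_.poissonPMF (k * p)) (bern p) d - conv (_root_.poissonPMF (k * p)) (_root_.poissonPMF p) d| := by
      intro d
      have hcp : conv (_root_.poissonPMF (k * p)) (_root_.poissonPMF p) d = _root_.poissonPMF ((k+1 : ℕ) * p) d := by
        rw [conv_poisson]
        congr 1
        push_cast
        ring
      have hb : binom p (k+1) d = conv (bern p) (binom p k) d := by
        rw [binom_succ, conv_comm]
      have hmid : conv (bern p) (_root_.poissonPMF (k * p)) d
          = conv (_root_.poissonPMF (k * p)) (bern p) d := conv_comm _ _ _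
      rw [hb, ← hcp]
      calc |conv (bern p) (binom p k) d - conv (_root_.poissonPMF (k*p)) (_root_.poissonPMF p) d|
          = |(conv (bern p) (binom p k) d - conv (bern p) (_root_.poissonPMF (k * p)) d)
            + (conv (_root_.poissonPMF (k*p)) (bern p) d - conv (_root_.poissonPMF (k*p)) (_root_.poissonPMF p) d)| := by
            rw [hmid]; ring_nf
      _ ≤ _ := abs_add_le _ _
    have hsum12 : Summable (fun d =>
        |conv (bern p) (binom p k) d - conv (bern p) (_root_.poissonPMF (k * p)) d|
        + |conv (_root_.poissonPMF (k * p)) (bern p) d - conv (_root_.poissonPMF (k * p)) (_root_.poissonPMF p) d|) :=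
      hc1.add hd1
    have hL : Summable (fun d => |binom p (k+1) d - _root_.poissonPMF ((k+1 : ℕ) * p) d|) :=
      Summable.of_nonneg_of_le (fun d => abs_nonneg _) tri hsum12
    calc ∑' d, |binom p (k+1) d - _root_.poissonPMF ((k+1 : ℕ) * p) d|
        ≤ ∑' d, (|conv (bern p) (binom p k) d - conv (bern p) (_root_.poissonPMF (k * p)) d|
          + |conv (_root_.poissonPMF (k * p)) (bern p) d
            - conv (_root_.poissonPMF (k * p)) (_root_.poissonPMF p) d|) := Summable.tsum_le_tsum tri hL hsum12
    _ = (∑' d, |conv (bern p) (binom p k) d - conv (bern p) (_root_.poissonPMF (k * p)) d|)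
        + ∑' d, |conv (_root_.poissonPMF (k * p)) (bern p) d
            - conv (_root_.poissonPMF (k * p)) (_root_.poissonPMF p) d| := Summable.tsum_add hc1 hd1
    _ ≤ (∑' d, bern p d) * (∑' d, |binom p k d - _root_.poissonPMF (k * p) d|)
        + (∑' d, _root_.poissonPMF (k * p) d) * ∑' d, |bern p d - _root_.poissonPMF p d| := by
          exact add_le_add hc2 hd2
    _ ≤ 1 * (3 * k * p ^ 2) + 1 * (3 * p ^ 2) := by
          rw [bern_tsum, poisson_tsum]
          have hb := l1_bern_poisson h0 h1
          linarith [ih, hb]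
    _ = 3 * (k+1 : ℕ) * p ^ 2 := by push_cast; ring



open MeasureTheory ProbabilityTheory Finset

lemma binom_law {Ω : Type} [MeasurableSpace Ω] (P : Measure Ω) [IsProbabilityMeasure P]
    {k : ℕ} (e : Fin k → Ω → Bool) (me : ∀ j, Measurable (e j))
    (hind : iIndepFun e P)
    (q : ENNReal) (hq : ∀ j, P (e j ⁻¹' {true}) = q)
    (A : Set ℕ) [DecidablePred (· ∈ A)] :
    P {ω | (Finset.univ.filter fun j : Fin k => e j ω = true).card ∈ A}
      = ∑ d ∈ Finset.range (k+1),
          (if d ∈ A then (k.choose d : ENNReal) * (q ^ d * (1 - q) ^ (k - d)) else 0) := by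
  classical
  set F : Ω → Finset (Fin k) := fun ω => Finset.univ.filter fun j => e j ω = true with hF
  have hset : ∀ T : Finset (Fin k),
      {ω | F ω = T} = ⋂ j, e j ⁻¹' {if j ∈ T then true else false} := by
    intro T; ext ω
    simp only [Set.mem_setOf_eq, Set.mem_iInter, Set.mem_preimage, Set.mem_singleton_iff, hF]
    constructor
    · intro h j
      split_ifs with hj
      · rw [← h] at hj
        exact (Finset.mem_filter.mp hj).2
      · rw [← h] at hj
        rcases Bool.eq_false_or_eq_true (e j ω) with h' | h'
        · exact absurd (Finset.mem_filter.mpr ⟨Finset.mem_univ j, h'⟩) hj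
        · exact h'
    · intro h
      ext j
      simp only [Finset.mem_filter, Finset.mem_univ, true_and]
      have hj := h j
      split_ifs at hj with hmem
      · exact ⟨fun _ => hmem, fun _ => hj⟩
      · constructor
        · intro htrue
          rw [htrue] at hj
          simp at hj
        · intro hmem'
          exact absurd hmem' hmem
  have hmeasT : ∀ T : Finset (Fin k), MeasurableSet {ω | F ω = T} := by
    intro T
    rw [hset]
    exact MeasurableSet.iInter fun j => (me j) (measurableSet_singleton _)
  have hfalse : ∀ j, P (e j ⁻¹' {false}) = 1 - q := by
    intro j
    have hc : e j ⁻¹' {false} = (e j ⁻¹' {true})ᶜ := by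
      ext ω
      simp only [Set.mem_preimage, Set.mem_singleton_iff, Set.mem_compl_iff, Bool.not_eq_true]
    rw [hc, measure_compl ((me j) (measurableSet_singleton _)) (measure_ne_top P _),
      measure_univ, hq j]
  have hPT : ∀ T : Finset (Fin k),
      P {ω | F ω = T} = q ^ T.card * (1 - q) ^ (k - T.card) := by
    intro T
    rw [hset]
    have hprod := hind.measure_inter_preimage_eq_mul Finset.univ
      (sets := fun j => {if j ∈ T then true else false})
      (fun j _ => measurableSet_singleton _)
    have huniv : (⋂ j ∈ Finset.univ, e j ⁻¹' {if j ∈ T then true else false})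
        = ⋂ j, e j ⁻¹' {if j ∈ T then true else false} := by
      simp
    rw [huniv] at hprod
    rw [hprod]
    have : ∀ j, P (e j ⁻¹' {if j ∈ T then true else false})
        = if j ∈ T then q else 1 - q := by
      intro j
      split_ifs
      · exact hq j
      · exact hfalse j
    rw [Finset.prod_congr rfl fun j _ => this j, Finset.prod_ite, Finset.prod_const,
      Finset.prod_const]
    congr 1
    · congr 1
      rw [Finset.filter_mem_eq_inter, Finset.univ_inter]
    · congr 1
      rw [Finset.filter_not, Finset.filter_mem_eq_inter, Finset.univ_inter,
        Finset.card_sdiff_of_subset (Finset.subset_univ T), Finset.card_univ, Fintype.card_fin]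
  have hdecomp : {ω | (F ω).card ∈ A}
      = ⋃ T ∈ Finset.univ.filter (fun T : Finset (Fin k) => T.card ∈ A), {ω | F ω = T} := by
    ext ω
    simp only [Set.mem_setOf_eq, Set.mem_iUnion, Finset.mem_filter, Finset.mem_univ, true_and]
    constructor
    · intro h
      exact ⟨F ω, h, rfl⟩
    · rintro ⟨T, hT, hωT⟩
      have hEq : F ω = T := hωT
      rw [hEq]; exact hT
  have hdisj : Set.PairwiseDisjoint
      (↑(Finset.univ.filter (fun T : Finset (Fin k) => T.card ∈ A)))
      (fun T => {ω | F ω = T}) := by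
    intro T _ T' _ hne
    apply Set.disjoint_left.mpr
    intro ω h1 h2
    have e1 : F ω = T := h1
    have e2 : F ω = T' := h2
    exact hne (e1.symm.trans e2)
  calc P {ω | (F ω).card ∈ A}
      = ∑ T ∈ Finset.univ.filter (fun T : Finset (Fin k) => T.card ∈ A),
          P {ω | F ω = T} := by
        rw [hdecomp, measure_biUnion_finset hdisj fun T _ => hmeasT T]
  _ = ∑ T : Finset (Fin k), if T.card ∈ A then q ^ T.card * (1 - q) ^ (k - T.card) else 0 := by
        rw [Finset.sum_filter]
        exact Finset.sum_congr rfl fun T _ => by rw [hPT T]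
  _ = ∑ d ∈ Finset.range (k+1),
        (if d ∈ A then (k.choose d : ENNReal) * (q ^ d * (1 - q) ^ (k - d)) else 0) := by
        rw [← Finset.powerset_univ, Finset.sum_powerset]
        rw [Finset.card_univ, Fintype.card_fin]
        refine Finset.sum_congr rfl fun d hd => ?_
        have hcongr : ∀ T ∈ Finset.powersetCard d (Finset.univ : Finset (Fin k)),
            (if T.card ∈ A then q ^ T.card * (1 - q) ^ (k - T.card) else 0)
            = if d ∈ A then q ^ d * (1 - q) ^ (k - d) else 0 := by
          intro T hT
          rw [(Finset.mem_powersetCard.mp hT).2]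
        rw [Finset.sum_congr rfl hcongr, Finset.sum_const, Finset.card_powersetCard,
          Finset.card_univ, Fintype.card_fin, nsmul_eq_mul, mul_ite, mul_zero]



open MeasureTheory

lemma kfun_nonneg {a b : ℝ} (ha : 0 ≤ a) (hb : 0 ≤ b) (x y : ℝ) : 0 ≤ kfun a b x y := by
  unfold kfun
  have : 0 ≤ (if 0 < x * y then a else b) := by split_ifs <;> assumption
  positivity

lemma kfunMax_pos {a b φmax : ℝ} (ha : 0 < a) (hb : 0 < b) (hφ : 0 < φmax) :
    0 < kfunMax a b φmax := by
  unfold kfunMax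
  have : 0 < max a b := lt_max_of_lt_left ha
  positivity

lemma kfun_le {a b φmax : ℝ} (ha : 0 ≤ a) (hb : 0 ≤ b) {x y : ℝ}
    (hx : |x| ≤ φmax) (hy : |y| ≤ φmax) : kfun a b x y ≤ kfunMax a b φmax := by
  unfold kfun kfunMax
  have h1 : |x * y| ≤ φmax ^ 2 := by
    rw [abs_mul]
    have h0x : 0 ≤ |x| := abs_nonneg x
    have h0y : 0 ≤ |y| := abs_nonneg y
    calc |x| * |y| ≤ φmax * φmax := mul_le_mul hx hy h0y (le_trans h0x hx)
    _ = φmax ^ 2 := by ring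
  have h2 : (if 0 < x * y then a else b) ≤ max a b := by
    split_ifs
    · exact le_max_left a b
    · exact le_max_right a b
  have h3 : 0 ≤ (if 0 < x * y then a else b) := by split_ifs <;> assumption
  calc |x * y| * (if 0 < x * y then a else b) ≤ φmax ^ 2 * max a b :=
        mul_le_mul h1 h2 h3 (by positivity)
  _ = max a b * φmax ^ 2 := by ring

lemma kfun_measurable (a b x : ℝ) : Measurable (kfun a b x) := by
  unfold kfun
  apply Measurable.mul
  · exact (measurable_id.const_mul x).abs
  · exact Measurable.ite (measurableSet_lt measurable_const (measurable_id.const_mul x))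
      measurable_const measurable_const

lemma typeLaw_isProb (ν : Measure ℝ) [IsProbabilityMeasure ν] :
    IsProbabilityMeasure (typeLaw ν) := by
  constructor
  unfold typeLaw
  rw [Measure.smul_apply, Measure.add_apply, Measure.map_apply measurable_neg .univ]
  simp [ENNReal.inv_mul_cancel]
  rw [one_add_one_eq_two, ENNReal.inv_mul_cancel (by norm_num) (by norm_num)]

lemma typeLaw_ae {φmin φmax : ℝ} (hφ : 0 < φmin) (ν : Measure ℝ)
    (hν : ∀ᵐ x ∂ν, x ∈ Set.Icc φmin φmax) :
    ∀ᵐ y ∂(typeLaw ν), |y| ∈ Set.Icc φmin φmax := by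
  rw [ae_iff] at hν ⊢
  set s : Set ℝ := {y | ¬ |y| ∈ Set.Icc φmin φmax} with hs
  have hsm : MeasurableSet s := by
    have : s = (fun y : ℝ => |y|) ⁻¹' (Set.Icc φmin φmax)ᶜ := rfl
    rw [this]
    exact measurable_abs (measurableSet_Icc.compl)
  have hsub : ∀ x : ℝ, x ∈ Set.Icc φmin φmax → (x ∉ s ∧ -x ∉ s) := by
    intro x hx
    have hx0 : 0 ≤ x := le_trans (le_of_lt hφ) hx.1
    have habs : |x| = x := abs_of_nonneg hx0
    constructor
    · simp only [hs, Set.mem_setOf_eq, not_not]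
      rw [habs]; exact hx
    · simp only [hs, Set.mem_setOf_eq, not_not]
      rw [abs_neg, habs]; exact hx
  unfold typeLaw
  rw [Measure.smul_apply, Measure.add_apply, Measure.map_apply measurable_neg hsm]
  have h1 : ν ((fun x => -x) ⁻¹' s) = 0 := by
    refine measure_mono_null ?_ hν
    intro x hx
    simp only [Set.mem_preimage] at hx
    simp only [Set.mem_setOf_eq]
    intro hmem
    exact (hsub x hmem).2 hx
  have h2 : ν s = 0 := by
    refine measure_mono_null ?_ hν
    intro x hx
    simp only [Set.mem_setOf_eq]
    intro hmem
    exact (hsub x hmem).1 hx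
  rw [h1, h2]
  simp

set_option maxHeartbeats 1000000 in
lemma explored_estimates (a b φmin φmax : ℝ) (ha : 0 < a) (hb : 0 < b) (hφ : 0 < φmin)
    (hφφ : φmin ≤ φmax) (ν : Measure ℝ) [IsProbabilityMeasure ν]
    (hν : ∀ᵐ x ∂ν, x ∈ Set.Icc φmin φmax)
    (n m : ℕ) (hm : 1 ≤ m) (x : Fin m → ℝ) (hx : ∀ i, |x i| ∈ Set.Icc φmin φmax)
    (xu : ℝ) (hxu : |xu| ∈ Set.Icc φmin φmax)
    (hn : 0 < n) (hsmall : (m : ℝ) * kfunMax a b φmax / n ≤ 1 / 2) :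
    0 ≤ lamTotal a b ν xu ∧ lamTotal a b ν xu ≤ kfunMax a b φmax ∧
    (0:ℝ) ≤ (∫⁻ y, ENNReal.ofReal (kfun a b xu y) ∂(muExplored a b ν n m x)).toReal ∧
    (∫⁻ y, ENNReal.ofReal (kfun a b xu y) ∂(muExplored a b ν n m x)).toReal
      ≤ 2 * kfunMax a b φmax ∧
    |(∫⁻ y, ENNReal.ofReal (kfun a b xu y) ∂(muExplored a b ν n m x)).toReal
      - lamTotal a b ν xu| ≤ 2 * kfunMax a b φmax ^ 2 * m / n ∧
    (∫⁻ y, ENNReal.ofReal (kfun a b xu y) ∂(muExplored a b ν n m x)) ≠ ⊤ := by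
  haveI := typeLaw_isProb ν
  set μ := typeLaw ν with hμ
  have hφmax : 0 < φmax := lt_of_lt_of_le hφ hφφ
  set K := kfunMax a b φmax with hKdef
  have hK : 0 < K := kfunMax_pos ha hb hφmax
  have hn' : (0:ℝ) < n := by exact_mod_cast hn
  set t : ℝ := K / n with htdef
  have ht0 : 0 ≤ t := by positivity
  have hmt : (m:ℝ) * t ≤ 1/2 := by
    rw [htdef]
    rw [mul_div_assoc] at hsmall
    exact hsmall
  have hm' : (1:ℝ) ≤ m := by exact_mod_cast hm
  have ht : t ≤ 1/2 := by nlinarith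
  set c : ℝ := (1 - t)^m with hcdef
  have hc1 : c ≤ 1 := pow_le_one₀ (by linarith) (by linarith)
  have hc2 : 1 - m*t ≤ c := by
    have h := one_add_mul_le_pow (a := -t) (by linarith) m
    have : (1 + -t) ^ m = c := by rw [hcdef]; ring_nf
    rw [this] at h
    linarith
  have hc3 : (1:ℝ)/2 ≤ c := by linarith
  have hc0 : 0 < c := by linarith
  set g : ℝ → ENNReal := fun y => ENNReal.ofReal (∏ i : Fin m, (1 - kfun a b (x i) y / n))
    with hgdef
  have hgmeas : Measurable g := by
    apply Measurable.ennreal_ofReal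
    apply Finset.measurable_prod
    intro i _
    exact measurable_const.sub ((kfun_measurable a b (x i)).div_const n)
  have hae : ∀ᵐ y ∂μ, |y| ∈ Set.Icc φmin φmax := typeLaw_ae hφ ν hν
  have hgbound : ∀ᵐ y ∂μ, ENNReal.ofReal c ≤ g y ∧ g y ≤ 1 := by
    filter_upwards [hae] with y hy
    have hfac : ∀ i : Fin m, 1 - t ≤ 1 - kfun a b (x i) y / n ∧ 1 - kfun a b (x i) y / n ≤ 1 := by
      intro i
      have h1 : kfun a b (x i) y ≤ K := kfun_le ha.le hb.le (hx i).2 hy.2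
      have h2 : 0 ≤ kfun a b (x i) y := kfun_nonneg ha.le hb.le _ _
      constructor
      · have hdiv : kfun a b (x i) y / n ≤ t := by
          rw [htdef]
          exact div_le_div_of_nonneg_right h1 hn'.le
        linarith
      · have : 0 ≤ kfun a b (x i) y / n := by positivity
        linarith
    constructor
    · apply ENNReal.ofReal_le_ofReal
      calc c = ∏ _i : Fin m, (1 - t) := by
            rw [Finset.prod_const, Finset.card_univ, Fintype.card_fin]
      _ ≤ ∏ i : Fin m, (1 - kfun a b (x i) y / n) :=
            Finset.prod_le_prod (fun i _ => by linarith) (fun i _ => (hfac i).1)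
    · rw [← ENNReal.ofReal_one]
      apply ENNReal.ofReal_le_ofReal
      exact Finset.prod_le_one (fun i _ => by linarith [(hfac i).1]) (fun i _ => (hfac i).2)
  set W := μ.withDensity g with hW
  set Z := W Set.univ with hZ
  have hZ_eq : Z = ∫⁻ y, g y ∂μ := by
    rw [hZ, hW, withDensity_apply _ MeasurableSet.univ, Measure.restrict_univ]
  have hZle : Z ≤ 1 := by
    rw [hZ_eq]
    calc ∫⁻ y, g y ∂μ ≤ ∫⁻ _, 1 ∂μ :=
          lintegral_mono_ae (by filter_upwards [hgbound] with y h; exact h.2)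
    _ = 1 := by simp
  have hZge : ENNReal.ofReal c ≤ Z := by
    rw [hZ_eq]
    calc ENNReal.ofReal c = ∫⁻ _, ENNReal.ofReal c ∂μ := by simp
    _ ≤ ∫⁻ y, g y ∂μ :=
          lintegral_mono_ae (by filter_upwards [hgbound] with y h; exact h.1)
  set F : ℝ → ENNReal := fun y => ENNReal.ofReal (kfun a b xu y) with hFdef
  have hFmeas : Measurable F := (kfun_measurable a b xu).ennreal_ofReal
  set I := ∫⁻ y, F y ∂μ with hI
  have hIle : I ≤ ENNReal.ofReal K := by
    calc I ≤ ∫⁻ _, ENNReal.ofReal K ∂μ := by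
          refine lintegral_mono_ae ?_
          filter_upwards [hae] with y hy
          exact ENNReal.ofReal_le_ofReal (kfun_le ha.le hb.le hxu.2 hy.2)
    _ = ENNReal.ofReal K := by simp
  have hIfin : I ≠ ⊤ := (lt_of_le_of_lt hIle ENNReal.ofReal_lt_top).ne
  set J := ∫⁻ y, g y * F y ∂μ with hJ
  have hJle : J ≤ I := by
    refine lintegral_mono_ae ?_
    filter_upwards [hgbound] with y h
    calc g y * F y ≤ 1 * F y := mul_le_mul_left h.2 _
    _ = F y := one_mul _
  have hJge : ENNReal.ofReal c * I ≤ J := by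
    rw [hI, ← lintegral_const_mul _ hFmeas]
    refine lintegral_mono_ae ?_
    filter_upwards [hgbound] with y h
    exact mul_le_mul_left h.1 _
  have hmuE : muExplored a b ν n m x = Z⁻¹ • W := rfl
  have hIm : ∫⁻ y, F y ∂(muExplored a b ν n m x) = Z⁻¹ * J := by
    rw [hmuE, lintegral_smul_measure]
    congr 1
    rw [hW, lintegral_withDensity_eq_lintegral_mul _ hgmeas hFmeas]
    rfl
  set Im := ∫⁻ y, F y ∂(muExplored a b ν n m x) with hImdef
  have hcne : ENNReal.ofReal c ≠ 0 := by
    simp only [ne_eq, ENNReal.ofReal_eq_zero, not_le]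
    exact hc0
  have hcfin : (ENNReal.ofReal c)⁻¹ ≠ ⊤ := by
    simp [hcne]
  have hIm_up : Im ≤ (ENNReal.ofReal c)⁻¹ * I := by
    rw [hIm]
    exact mul_le_mul' (ENNReal.inv_le_inv' hZge) hJle
  have hIm_low : ENNReal.ofReal c * I ≤ Im := by
    rw [hIm]
    calc ENNReal.ofReal c * I ≤ J := hJge
    _ = 1 * J := (one_mul J).symm
    _ ≤ Z⁻¹ * J := mul_le_mul_left (by simpa using ENNReal.inv_le_inv' hZle) J
  have hImfin : Im ≠ ⊤ :=
    (lt_of_le_of_lt hIm_up (ENNReal.mul_lt_top hcfin.lt_top (hIfin.lt_top))).ne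
  have hlam : lamTotal a b ν xu = I.toReal := by
    unfold lamTotal
    rw [← hμ, integral_eq_lintegral_of_nonneg_ae
      (Filter.Eventually.of_forall fun y => kfun_nonneg ha.le hb.le xu y)
      (kfun_measurable a b xu).aestronglyMeasurable]
  set lam := lamTotal a b ν xu with hlamdef
  have hlam0 : 0 ≤ lam := by rw [hlam]; exact ENNReal.toReal_nonneg
  have hlamK : lam ≤ K := by
    rw [hlam]
    calc I.toReal ≤ (ENNReal.ofReal K).toReal :=
          ENNReal.toReal_mono ENNReal.ofReal_ne_top hIle
    _ = K := ENNReal.toReal_ofReal hK.le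
  set ρ := Im.toReal with hρdef
  have hρ0 : 0 ≤ ρ := ENNReal.toReal_nonneg
  have hρ_up : ρ ≤ c⁻¹ * lam := by
    have h := ENNReal.toReal_mono (ENNReal.mul_ne_top hcfin hIfin) hIm_up
    rw [ENNReal.toReal_mul, ENNReal.toReal_inv, ENNReal.toReal_ofReal hc0.le] at h
    rw [hρdef, hlam]
    exact h
  have hρ_low : c * lam ≤ ρ := by
    have h := ENNReal.toReal_mono hImfin hIm_low
    rw [ENNReal.toReal_mul, ENNReal.toReal_ofReal hc0.le] at h
    rw [hρdef, hlam]
    exact h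
  have hinvc : c⁻¹ ≤ 3 - 2*c := by
    have h1 : (0:ℝ) ≤ (1 - c) * (2*c - 1) := mul_nonneg (by linarith) (by linarith)
    have h2 : c⁻¹ * c = 1 := inv_mul_cancel₀ hc0.ne'
    nlinarith
  have hρ2K : ρ ≤ 2 * K := by
    have hc' : c⁻¹ ≤ 2 := by linarith
    have : c⁻¹ * lam ≤ 2 * K := by
      apply mul_le_mul hc' hlamK hlam0 (by norm_num)
    linarith
  refine ⟨hlam0, hlamK, hρ0, hρ2K, ?_, hImfin⟩
  rw [abs_le]
  have hexp : 2 * (m * t) * K = 2 * K^2 * m / n := by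
    rw [htdef]; ring
  constructor
  · -- -(2K²m/n) ≤ ρ - lam
    have h1 : lam - ρ ≤ (1 - c) * lam := by nlinarith
    have h2 : (1 - c) * lam ≤ (m * t) * K := by nlinarith
    have h0 : 0 ≤ (m:ℝ) * t * K := mul_nonneg (mul_nonneg (by positivity) ht0) hK.le
    linarith [hexp]
  · have h1 : ρ - lam ≤ (c⁻¹ - 1) * lam := by nlinarith
    have h2 : c⁻¹ - 1 ≤ 2 * (1 - c) := by linarith
    have h3 : (c⁻¹ - 1) * lam ≤ 2 * (m * t) * K := by nlinarith
    linarith [hexp]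


lemma l1_triangle {f g h : ℕ → ℝ} (h1 : Summable fun d => |f d - g d|)
    (h2 : Summable fun d => |g d - h d|) :
    (Summable fun d => |f d - h d|) ∧
    ∑' d, |f d - h d| ≤ (∑' d, |f d - g d|) + ∑' d, |g d - h d| := by
  have hpt : ∀ d, |f d - h d| ≤ |f d - g d| + |g d - h d| := by
    intro d
    have : f d - h d = (f d - g d) + (g d - h d) := by ring
    rw [this]
    exact abs_add_le _ _
  have hsum : Summable fun d => |f d - h d| :=
    Summable.of_nonneg_of_le (fun d => abs_nonneg _) hpt (h1.add h2)
  exact ⟨hsum, (Summable.tsum_le_tsum hpt hsum (h1.add h2)).trans_eq (Summable.tsum_add h1 h2)⟩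

lemma tsum_abs_sub_subtype (f g : ℕ → ℝ) (hf : Summable f) (hg : Summable g)
    (h : Summable fun d => |f d - g d|) (A : Set ℕ) :
    |(∑' j : A, f (j:ℕ)) - ∑' j : A, g (j:ℕ)| ≤ ∑' d, |f d - g d| := by
  have hfA : Summable fun j : A => f (j:ℕ) := hf.subtype A
  have hgA : Summable fun j : A => g (j:ℕ) := hg.subtype A
  have hdA : Summable fun j : A => |f (j:ℕ) - g (j:ℕ)| := h.subtype A
  calc |(∑' j : A, f (j:ℕ)) - ∑' j : A, g (j:ℕ)|
      = |∑' j : A, (f (j:ℕ) - g (j:ℕ))| := by rw [Summable.tsum_sub hfA hgA]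
  _ ≤ ∑' j : A, |f (j:ℕ) - g (j:ℕ)| := by
      have := norm_tsum_le_tsum_norm (f := fun j : A => f (j:ℕ) - g (j:ℕ)) (by
        simpa [Real.norm_eq_abs] using hdA)
      simpa [Real.norm_eq_abs] using this
  _ = ∑' d, Set.indicator A (fun d => |f d - g d|) d := by
      rw [tsum_subtype A (fun d => |f d - g d|)]
  _ ≤ ∑' d, |f d - g d| := by
      refine Summable.tsum_le_tsum (fun d => ?_) ((h.indicator A)) h
      exact Set.indicator_le_self' (fun d _ => abs_nonneg _) d

end Stmt9

set_option maxHeartbeats 2000000 in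
/-- **The number of newly discovered neighbours is approximately `Poi(λ_x(S))`.**
In the exploration process of the DC-PPM, if the vertex currently being explored has type `x`
and `D` is its number of neighbours in the unexplored set `U(m)` (of size `k`), then the total
variation distance between the law of `D` and the Poisson law `Poi(λ_x(S))` is at most
`κ_max·(n-|U(m)|)/n + 3κ_max²·(m/n)`, up to an absolute multiplicative constant coming from
the Poisson comparison, for `n ≥ N_m`. -/
theorem stmt9 :
    ∃ K : ℝ, 0 < K ∧
      ∀ a b φmin φmax : ℝ, 0 < a → 0 < b → 0 < φmin → φmin ≤ φmax →
      ∀ ν : Measure ℝ, IsProbabilityMeasure ν → (∀ᵐ x ∂ν, x ∈ Set.Icc φmin φmax) →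
      ∀ m : ℕ, 1 ≤ m → ∃ N : ℕ, ∀ n k : ℕ, N ≤ n → k ≤ n →
        ∀ S : NbhdStep a b φmin φmax ν n m k, ∀ A : Set ℕ,
          |(S.P {ω | (Finset.univ.filter fun j : Fin k => S.e j ω = true).card ∈ A}).toReal
              - ∑' j : A, poissonPMF (lamTotal a b ν S.xu) (j : ℕ)|
            ≤ K * (kfunMax a b φmax * ((n : ℝ) - k) / n
                + 3 * kfunMax a b φmax ^ 2 * m / n) := by
  classical
  refine ⟨10, by norm_num, ?_⟩
  intro a b φmin φmax ha hb hφ hφφ ν hνP hν m hm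
  haveI := hνP
  set K := kfunMax a b φmax with hKdef
  have hφmax : 0 < φmax := lt_of_lt_of_le hφ hφφ
  have hK : 0 < K := Stmt9.kfunMax_pos ha hb hφmax
  refine ⟨⌈2 * (m:ℝ) * K⌉₊ + 1, ?_⟩
  intro n k hNn hkn S A
  letI := S.mΩ
  haveI := S.hP
  have hn : 0 < n := by omega
  have hn' : (0:ℝ) < n := by exact_mod_cast hn
  have hm' : (1:ℝ) ≤ m := by exact_mod_cast hm
  have hkn' : (k:ℝ) ≤ n := by exact_mod_cast hkn
  have hceil : (2 * (m:ℝ) * K) ≤ n := by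
    calc (2*(m:ℝ)*K) ≤ (⌈2*(m:ℝ)*K⌉₊ : ℝ) := Nat.le_ceil _
    _ ≤ n := by
        have : ⌈2*(m:ℝ)*K⌉₊ ≤ n := by omega
        exact_mod_cast this
  have hsmall : (m:ℝ) * K / n ≤ 1/2 := by
    rw [div_le_iff₀ hn']
    linarith [hceil]
  obtain ⟨hlam0, hlamK, hρ0, hρ2K, hdiff, hImfin⟩ :=
    Stmt9.explored_estimates a b φmin φmax ha hb hφ hφφ ν hν n m hm S.x S.hx S.xu S.hxu
      hn hsmall
  set μE := muExplored a b ν n m S.x with hμE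
  set Im := ∫⁻ y, ENNReal.ofReal (kfun a b S.xu y) ∂μE with hImdef
  set ρ := Im.toReal with hρdef
  set lam := lamTotal a b ν S.xu with hlamdef
  set q : ENNReal := ∫⁻ y, ENNReal.ofReal (kfun a b S.xu y / n) ∂μE with hqdef
  have hq : ∀ j, S.P (S.e j ⁻¹' {true}) = q := by
    intro j
    have h := S.elaw j Set.univ MeasurableSet.univ
    have hset : {ω | S.Y j ω ∈ Set.univ ∧ S.e j ω = true} = S.e j ⁻¹' {true} := by
      ext ω; simp
    rw [hset] at h
    rw [h, Measure.restrict_univ]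
  have hq_eq : q = Im / n := by
    rw [hqdef, hImdef]
    have hpt : ∀ y, ENNReal.ofReal (kfun a b S.xu y / n)
        = ENNReal.ofReal (kfun a b S.xu y) * ((n : ENNReal))⁻¹ := by
      intro y
      rw [ENNReal.ofReal_div_of_pos hn', ENNReal.ofReal_natCast, div_eq_mul_inv]
    simp_rw [hpt]
    rw [lintegral_mul_const _ ((Stmt9.kfun_measurable a b S.xu).ennreal_ofReal),
      div_eq_mul_inv]
  have hqfin : q ≠ ⊤ := by
    rw [hq_eq]
    exact (ENNReal.div_lt_top hImfin (by exact_mod_cast hn.ne')).ne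
  set p := q.toReal with hpdef
  have hp_eq : p = ρ / n := by
    rw [hpdef, hq_eq, ENNReal.toReal_div, ENNReal.toReal_natCast]
  have hp0 : 0 ≤ p := ENNReal.toReal_nonneg
  have h2Kn : 2*K ≤ (n:ℝ) := by nlinarith
  have hp2 : p ≤ 2*K/n := by
    rw [hp_eq]
    exact div_le_div_of_nonneg_right hρ2K hn'.le
  have hp1 : p ≤ 1 := hp2.trans (by rw [div_le_one hn']; exact h2Kn)
  have hq1 : q ≤ 1 := by
    refine (ENNReal.toReal_le_toReal hqfin ENNReal.one_ne_top).mp ?_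
    rw [ENNReal.toReal_one]
    exact hp1
  have hind : ProbabilityTheory.iIndepFun
      S.e S.P := by
    have h := S.indep.comp (fun _ => Prod.snd) (fun _ => measurable_snd)
    exact h
  have hlaw := Stmt9.binom_law S.P S.e S.meas_e hind q hq A
  have hone_sub_fin : (1 - q) ≠ ⊤ := by
    exact (lt_of_le_of_lt tsub_le_self (by norm_num : (1:ENNReal) < ⊤)).ne
  have hfin_term : ∀ d ∈ Finset.range (k+1),
      (if d ∈ A then (k.choose d : ENNReal) * (q ^ d * (1 - q) ^ (k - d)) else 0) ≠ ⊤ := by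
    intro d _
    split_ifs
    · exact ENNReal.mul_ne_top (ENNReal.natCast_ne_top _)
        (ENNReal.mul_ne_top (ENNReal.pow_ne_top hqfin) (ENNReal.pow_ne_top hone_sub_fin))
    · exact ENNReal.zero_ne_top
  have hPval : (S.P {ω | (Finset.univ.filter fun j : Fin k => S.e j ω = true).card ∈ A}).toReal
      = ∑ d ∈ Finset.range (k+1), (if d ∈ A then Stmt9.binom p k d else 0) := by
    rw [hlaw, ENNReal.toReal_sum hfin_term]
    refine Finset.sum_congr rfl fun d _ => ?_
    split_ifs
    · rw [ENNReal.toReal_mul, ENNReal.toReal_mul, ENNReal.toReal_pow, ENNReal.toReal_pow,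
        ENNReal.toReal_natCast, ENNReal.toReal_sub_of_le hq1 ENNReal.one_ne_top,
        ENNReal.toReal_one]
      simp only [Stmt9.binom, ← hpdef]
      ring
    · simp
  have hbinA : (∑' j : A, Stmt9.binom p k (j:ℕ))
      = ∑ d ∈ Finset.range (k+1), (if d ∈ A then Stmt9.binom p k d else 0) := by
    rw [tsum_subtype A (fun d => Stmt9.binom p k d),
      tsum_eq_sum (s := Finset.range (k+1))]
    · exact Finset.sum_congr rfl fun d _ => by rw [Set.indicator_apply]
    · intro d hd
      rw [Set.indicator_apply]
      split_ifs
      · refine Stmt9.binom_eq_zero ?_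
        simp only [Finset.mem_range, not_lt] at hd
        omega
      · rfl
  have hkp0 : (0:ℝ) ≤ (k:ℝ) * p := by positivity
  have hS1 : Summable (fun d => |Stmt9.binom p k d - poissonPMF ((k:ℝ)*p) d|) :=
    Stmt9.l1_summable_of_pmfs (Stmt9.binom_nonneg hp0 hp1 k) (Stmt9.poisson_nonneg hkp0)
      (Stmt9.binom_summable p k) (Stmt9.poisson_summable _)
  have hS2 : Summable (fun d => |poissonPMF ((k:ℝ)*p) d - poissonPMF lam d|) :=
    Stmt9.l1_summable_of_pmfs (Stmt9.poisson_nonneg hkp0) (Stmt9.poisson_nonneg hlam0)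
      (Stmt9.poisson_summable _) (Stmt9.poisson_summable _)
  obtain ⟨hS3, htri⟩ := Stmt9.l1_triangle hS1 hS2
  have hmain : |(S.P {ω | (Finset.univ.filter fun j : Fin k => S.e j ω = true).card ∈ A}).toReal
        - ∑' j : A, poissonPMF lam (j:ℕ)|
      ≤ ∑' d, |Stmt9.binom p k d - poissonPMF lam d| := by
    rw [hPval, ← hbinA]
    exact Stmt9.tsum_abs_sub_subtype _ _ (Stmt9.binom_summable p k)
      (Stmt9.poisson_summable lam) hS3 A
  have hb1 : ∑' d, |Stmt9.binom p k d - poissonPMF ((k:ℝ)*p) d| ≤ 3*(k:ℝ)*p^2 :=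
    Stmt9.l1_binom_poisson hp0 hp1 k
  have hb2 : ∑' d, |poissonPMF ((k:ℝ)*p) d - poissonPMF lam d| ≤ 2*|(k:ℝ)*p - lam| :=
    Stmt9.l1_poisson_poisson hkp0 hlam0
  have hkey1 : 3*(k:ℝ)*p^2 ≤ 12*K^2*(m:ℝ)/n := by
    have h1 : 3*(k:ℝ)*p^2 ≤ 3*(n:ℝ)*p^2 := by nlinarith [sq_nonneg p]
    have h2 : 3*(n:ℝ)*p^2 ≤ 3*(n:ℝ)*(2*K/n)^2 := by
      have hle : p^2 ≤ (2*K/n)^2 := pow_le_pow_left₀ hp0 hp2 2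
      nlinarith
    have h3 : 3*(n:ℝ)*(2*K/n)^2 = 12*K^2/n := by
      field_simp
      ring
    have h4 : 12*K^2/n ≤ 12*K^2*(m:ℝ)/n := by
      apply div_le_div_of_nonneg_right _ hn'.le
      nlinarith
    linarith
  have hknn : (0:ℝ) ≤ ((n:ℝ)-k)/n := div_nonneg (by linarith) hn'.le
  have hkey2 : |(k:ℝ)*p - lam| ≤ 2*K*(((n:ℝ)-k)/n) + 2*K^2*(m:ℝ)/n := by
    have e1 : |(k:ℝ)*p - ρ| = ρ * (((n:ℝ)-k)/n) := by
      rw [hp_eq]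
      have heq : (k:ℝ)*(ρ/n) - ρ = -(ρ * (((n:ℝ)-k)/n)) := by
        field_simp
        ring
      rw [heq, abs_neg, abs_of_nonneg (mul_nonneg hρ0 hknn)]
    have e2 : ρ * (((n:ℝ)-k)/n) ≤ 2*K*(((n:ℝ)-k)/n) :=
      mul_le_mul_of_nonneg_right hρ2K hknn
    calc |(k:ℝ)*p - lam| ≤ |(k:ℝ)*p - ρ| + |ρ - lam| := abs_sub_le _ _ _
    _ ≤ 2*K*(((n:ℝ)-k)/n) + 2*K^2*(m:ℝ)/n := by
        rw [e1]
        linarith [hdiff, e2]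
  have c1 : (0:ℝ) ≤ K*((n:ℝ)-k)/n := div_nonneg (mul_nonneg hK.le (by linarith)) hn'.le
  have c2 : (0:ℝ) ≤ K^2*(m:ℝ)/n := by positivity
  calc |(S.P {ω | (Finset.univ.filter fun j : Fin k => S.e j ω = true).card ∈ A}).toReal
        - ∑' j : A, poissonPMF lam (j:ℕ)|
      ≤ ∑' d, |Stmt9.binom p k d - poissonPMF lam d| := hmain
  _ ≤ 3*(k:ℝ)*p^2 + 2*|(k:ℝ)*p - lam| := by linarith [htri, hb1, hb2]
  _ ≤ 12*K^2*(m:ℝ)/n + 2*(2*K*(((n:ℝ)-k)/n) + 2*K^2*(m:ℝ)/n) := by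
      have := abs_nonneg ((k:ℝ)*p - lam)
      linarith [hkey1, hkey2]
  _ ≤ 10 * (K * ((n:ℝ) - k) / n + 3 * K^2 * (m:ℝ) / n) := by
      ring_nf
      ring_nf at c1 c2
      linarith [c1, c2]
end
end

section
/- Let A, B, C be a partition of the n vertices with |A ∪ B| ≤ n^{1/8}, and let Ω(n) be the set of pairs (τ, ψ) of spin and weight configurations with |Σ_{u∈C} ψ_u τ_u| ≤ n^{3/4} (spins valued in ±1, weights in [φ_min, φ_max]). Then, uniformly over (τ, ψ) ∈ Ω(n) and over graphs g having no edges between A and C, Q_{A,C}(g, τ, ψ) = (1 + o_n(1)) · exp(-((a+b)/(2n)) · ‖A‖·‖C‖), where ‖U‖ = Σ_{u∈U} ψ_u and Q_{A,C}(g,τ,ψ) = Π_{u∈A, v∈C, τ_u=τ_v}(1 - a·ψ_uψ_v/n) · Π_{u∈A, v∈C, τ_u≠τ_v}(1 - b·ψ_uψ_v/n). -/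
/-!
Each factor of `Q_{A,C}` is `1 - x` with `|x| = O(1/n)`, and `exp (-x - 2x²) ≤ 1 - x ≤ exp (-x)`,
so `log Q_{A,C} = -∑ x + O(∑ x²)` with `∑ x² = O(|A| |C| / n²) = O(n^{-7/8})`. Writing the coupling
as `(a + b)/2 + (a - b)/2 · τ_u τ_v` splits `∑ x` into the main term `(a + b)/(2n) ‖A‖ ‖C‖` and
`(a - b)/(2n) m_A m_C`, where `m_U = ∑_{u ∈ U} ψ_u τ_u`; since `|m_A| ≤ M |A| ≤ M n^{1/8}` for
`M = max |φ_min| |φ_max|` and `|m_C| ≤ n^{3/4}`, the latter is `O(n^{-1/8})`.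
-/

noncomputable section

open Finset

/-- `Q_{A,C}(τ,ψ)`: the product over pairs `u ∈ A`, `v ∈ C` of the non-edge factors
`1 - a ψ_u ψ_v / n` (if `τ_u = τ_v`) or `1 - b ψ_u ψ_v / n` (if `τ_u ≠ τ_v`), valid when the
graph has no `A`–`C` edges. -/
def QAC (a b : ℝ) (n : ℕ) (A C : Finset (Fin n)) (τ : Fin n → Bool) (ψ : Fin n → ℝ) : ℝ :=
  ∏ u ∈ A, ∏ v ∈ C,
    (if τ u = τ v then 1 - a * ψ u * ψ v / n else 1 - b * ψ u * ψ v / n)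

/-- The spin `τ_u` identified with `±1`. -/
def sgn {n : ℕ} (τ : Fin n → Bool) (u : Fin n) : ℝ := if τ u = true then 1 else -1

open Real Filter Topology

lemma Real.exp_neg_sub_two_mul_sq_le_one_sub {x : ℝ} (hx : |x| ≤ 1 / 2) :
    exp (-x - 2 * x ^ 2) ≤ 1 - x := by
  have hlog := abs_log_sub_add_sum_range_le (hx.trans_lt (by norm_num)) 1
  simp only [range_one, sum_singleton, zero_add, pow_one, Nat.cast_zero, div_one] at hlog
  have hsq : |x| ^ 2 / (1 - |x|) ≤ 2 * x ^ 2 := by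
    rw [div_le_iff₀ (by linarith), sq_abs]
    nlinarith [sq_nonneg x]
  have hpos : 0 < 1 - x := by linarith [le_abs_self x]
  calc exp (-x - 2 * x ^ 2) ≤ exp (log (1 - x)) := by
        gcongr
        linarith [(abs_le.mp hlog).1]
    _ = 1 - x := exp_log hpos

section ProdOneSub

variable {ι : Type*} (s : Finset ι) {x : ι → ℝ}

lemma Finset.prod_one_sub_le_exp_neg_sum (hx : ∀ i ∈ s, x i ≤ 1) :
    ∏ i ∈ s, (1 - x i) ≤ exp (-∑ i ∈ s, x i) := by
  rw [← sum_neg_distrib, exp_sum]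
  exact prod_le_prod (fun i hi => sub_nonneg.mpr (hx i hi)) fun i _ => one_sub_le_exp_neg _

lemma Finset.exp_neg_sum_sub_le_prod_one_sub (hx : ∀ i ∈ s, |x i| ≤ 1 / 2) :
    exp (-∑ i ∈ s, x i - 2 * ∑ i ∈ s, x i ^ 2) ≤ ∏ i ∈ s, (1 - x i) := by
  have hsum : -∑ i ∈ s, x i - 2 * ∑ i ∈ s, x i ^ 2 = ∑ i ∈ s, (-x i - 2 * x i ^ 2) := by
    rw [sum_sub_distrib, sum_neg_distrib, mul_sum]
  rw [hsum, exp_sum]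
  exact prod_le_prod (fun _ _ => (exp_pos _).le)
    fun i hi => exp_neg_sub_two_mul_sq_le_one_sub (hx i hi)

end ProdOneSub

lemma abs_sub_one_le_of_exp_le_of_le_exp {r y₁ y₂ η : ℝ} (h₁ : exp y₁ ≤ r) (h₂ : r ≤ exp y₂)
    (hy₁ : |y₁| ≤ η) (hy₂ : |y₂| ≤ η) (hη : η ≤ 1) : |r - 1| ≤ 2 * η := by
  have e₁ := abs_le.mp (abs_exp_sub_one_le (hy₁.trans hη))
  have e₂ := abs_le.mp (abs_exp_sub_one_le (hy₂.trans hη))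
  rw [abs_le]
  constructor <;> linarith [e₁.1, e₂.2]

def edgeProb (a b : ℝ) (n : ℕ) (τ : Fin n → Bool) (ψ : Fin n → ℝ) (u v : Fin n) : ℝ :=
  (if τ u = τ v then a else b) * ψ u * ψ v / n

section EdgeProb

variable {a b : ℝ} {n : ℕ} {τ : Fin n → Bool} {ψ : Fin n → ℝ}

lemma QAC_eq_prod_product (A C : Finset (Fin n)) :
    QAC a b n A C τ ψ = ∏ p ∈ A ×ˢ C, (1 - edgeProb a b n τ ψ p.1 p.2) := by
  rw [prod_product]
  refine prod_congr rfl fun u _ => prod_congr rfl fun v _ => ?_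
  unfold edgeProb
  split_ifs <;> rfl

lemma edgeProb_eq (u v : Fin n) :
    edgeProb a b n τ ψ u v = (a + b) / (2 * n) * (ψ u * ψ v)
      + (a - b) / (2 * n) * ((ψ u * sgn τ u) * (ψ v * sgn τ v)) := by
  unfold edgeProb sgn
  cases τ u <;> cases τ v <;>
    simp only [Bool.false_eq_true, Bool.true_eq_false, if_true, if_false] <;> ring

lemma sum_edgeProb (A C : Finset (Fin n)) :
    ∑ p ∈ A ×ˢ C, edgeProb a b n τ ψ p.1 p.2 =
      (a + b) / (2 * n) * (∑ u ∈ A, ψ u) * (∑ v ∈ C, ψ v)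
        + (a - b) / (2 * n) * (∑ u ∈ A, ψ u * sgn τ u) * (∑ v ∈ C, ψ v * sgn τ v) := by
  simp only [edgeProb_eq, sum_add_distrib, ← mul_sum, mul_assoc, sum_product, sum_mul_sum]

lemma abs_sgn (τ : Fin n → Bool) (u : Fin n) : |sgn τ u| = 1 := by
  unfold sgn
  split_ifs <;> simp

variable {M : ℝ}

lemma abs_edgeProb_le (hψ : ∀ u, |ψ u| ≤ M) (u v : Fin n) :
    |edgeProb a b n τ ψ u v| ≤ max |a| |b| * M ^ 2 / n := by
  have hc : |if τ u = τ v then a else b| ≤ max |a| |b| := by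
    split_ifs
    exacts [le_max_left _ _, le_max_right _ _]
  unfold edgeProb
  rw [abs_div, abs_mul, abs_mul, Nat.abs_cast, sq, ← mul_assoc]
  have hM : 0 ≤ M := (abs_nonneg _).trans (hψ u)
  gcongr
  exacts [hψ u, hψ v]

lemma abs_sum_mul_sgn_le (hψ : ∀ u, |ψ u| ≤ M) (s : Finset (Fin n)) :
    |∑ u ∈ s, ψ u * sgn τ u| ≤ M * #s :=
  calc |∑ u ∈ s, ψ u * sgn τ u| ≤ ∑ u ∈ s, |ψ u * sgn τ u| := abs_sum_le_sum_abs _ _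
    _ ≤ #s • M := sum_le_card_nsmul _ _ _ fun u _ => by rw [abs_mul, abs_sgn, mul_one]; exact hψ u
    _ = M * #s := by rw [nsmul_eq_mul, mul_comm]

lemma sum_sq_edgeProb_le (hψ : ∀ u, |ψ u| ≤ M) (hn : 0 < n) {A : Finset (Fin n)}
    (hA : (#A : ℝ) ≤ (n : ℝ) ^ (1 / 8 : ℝ)) (C : Finset (Fin n)) :
    ∑ p ∈ A ×ˢ C, edgeProb a b n τ ψ p.1 p.2 ^ 2 ≤
      (max |a| |b| * M ^ 2) ^ 2 * (n : ℝ) ^ (-(1 / 8) : ℝ) := by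
  set K := max |a| |b| * M ^ 2
  have hn' : (1 : ℝ) ≤ n := Nat.one_le_cast.mpr hn
  have hC : (#C : ℝ) ≤ n := by exact_mod_cast (card_le_univ C).trans_eq (Fintype.card_fin n)
  calc ∑ p ∈ A ×ˢ C, edgeProb a b n τ ψ p.1 p.2 ^ 2 ≤ #(A ×ˢ C) • (K / n) ^ 2 :=
        sum_le_card_nsmul _ _ _ fun p _ => sq_le_sq' (abs_le.mp (abs_edgeProb_le hψ _ _)).1
          (abs_le.mp (abs_edgeProb_le hψ _ _)).2
    _ = K ^ 2 * (#A * #C / n ^ 2) := by rw [card_product, nsmul_eq_mul]; push_cast; ring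
    _ ≤ K ^ 2 * ((n : ℝ) ^ (1 / 8 : ℝ) * n / n ^ 2) := by gcongr
    _ = K ^ 2 * (n : ℝ) ^ (1 / 8 - 1 : ℝ) := by
        rw [rpow_sub_one (by positivity)]; field_simp
    _ ≤ K ^ 2 * (n : ℝ) ^ (-(1 / 8) : ℝ) := by
        gcongr
        norm_num

end EdgeProb

lemma abs_magnetization_term_le (a b : ℝ) {x M m₁ m₂ : ℝ} (hx : 0 < x) (hM : 0 ≤ M)
    (hm₁ : |m₁| ≤ M * x ^ (1 / 8 : ℝ)) (hm₂ : |m₂| ≤ x ^ (3 / 4 : ℝ)) :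
    |(a - b) / (2 * x) * m₁ * m₂| ≤ |a - b| * M / 2 * x ^ (-(1 / 8) : ℝ) :=
  calc |(a - b) / (2 * x) * m₁ * m₂| = |a - b| / 2 * |m₁| * |m₂| / x := by
        rw [abs_mul, abs_mul, abs_div, abs_mul, abs_two, abs_of_pos hx]; ring
    _ ≤ |a - b| / 2 * (M * x ^ (1 / 8 : ℝ)) * x ^ (3 / 4 : ℝ) / x := by gcongr
    _ = |a - b| * M / 2 * (x ^ (1 / 8 + 3 / 4 : ℝ) / x) := by rw [rpow_add hx]; ring
    _ = |a - b| * M / 2 * x ^ (-(1 / 8) : ℝ) := by rw [← rpow_sub_one hx.ne']; norm_num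

theorem abs_QAC_div_exp_sub_one_le {a b M : ℝ} {n : ℕ} {A C : Finset (Fin n)} {τ : Fin n → Bool}
    {ψ : Fin n → ℝ} (hψ : ∀ u, |ψ u| ≤ M) (hn : 0 < n) (hK : 2 * (max |a| |b| * M ^ 2) ≤ n)
    (hA : (#A : ℝ) ≤ (n : ℝ) ^ (1 / 8 : ℝ))
    (hC : |∑ u ∈ C, ψ u * sgn τ u| ≤ (n : ℝ) ^ (3 / 4 : ℝ))
    (hη : (|a - b| * M / 2 + 2 * (max |a| |b| * M ^ 2) ^ 2) * (n : ℝ) ^ (-(1 / 8) : ℝ) ≤ 1) :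
    |QAC a b n A C τ ψ / exp (-((a + b) / (2 * n)) * (∑ u ∈ A, ψ u) * (∑ u ∈ C, ψ u)) - 1| ≤
      2 * ((|a - b| * M / 2 + 2 * (max |a| |b| * M ^ 2) ^ 2) * (n : ℝ) ^ (-(1 / 8) : ℝ)) := by
  set K := max |a| |b| * M ^ 2
  set x := fun p : Fin n × Fin n => edgeProb a b n τ ψ p.1 p.2
  set D := (a - b) / (2 * n) * (∑ u ∈ A, ψ u * sgn τ u) * (∑ v ∈ C, ψ v * sgn τ v)
  set T := ∑ p ∈ A ×ˢ C, x p ^ 2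
  have hn₀ : (0 : ℝ) < n := Nat.cast_pos.mpr hn
  have hM : 0 ≤ M := (abs_nonneg _).trans (hψ ⟨0, hn⟩)
  have hx : ∀ p ∈ A ×ˢ C, |x p| ≤ 1 / 2 := fun p _ =>
    (abs_edgeProb_le hψ p.1 p.2).trans (by rw [div_le_iff₀ hn₀]; linarith)
  have hS : -∑ p ∈ A ×ˢ C, x p = -((a + b) / (2 * n)) * (∑ u ∈ A, ψ u) * (∑ u ∈ C, ψ u) - D := by
    rw [sum_edgeProb]; ring
  have hD : |D| ≤ |a - b| * M / 2 * (n : ℝ) ^ (-(1 / 8) : ℝ) :=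
    abs_magnetization_term_le a b hn₀ hM ((abs_sum_mul_sgn_le hψ A).trans (by gcongr)) hC
  obtain ⟨hD₁, hD₂⟩ := abs_le.mp hD
  have hT : T ≤ K ^ 2 * (n : ℝ) ^ (-(1 / 8) : ℝ) := sum_sq_edgeProb_le hψ hn hA C
  have hT₀ : 0 ≤ T := sum_nonneg fun _ _ => sq_nonneg _
  have hη_split : (|a - b| * M / 2 + 2 * K ^ 2) * (n : ℝ) ^ (-(1 / 8) : ℝ) =
      |a - b| * M / 2 * (n : ℝ) ^ (-(1 / 8) : ℝ) + 2 * (K ^ 2 * (n : ℝ) ^ (-(1 / 8) : ℝ)) := by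
    ring
  rw [QAC_eq_prod_product]
  refine abs_sub_one_le_of_exp_le_of_le_exp (y₁ := -D - 2 * T) (y₂ := -D) ?_ ?_ ?_ ?_ hη
  · have hlow : exp (-∑ p ∈ A ×ˢ C, x p - 2 * T) ≤ ∏ p ∈ A ×ˢ C, (1 - x p) :=
      exp_neg_sum_sub_le_prod_one_sub _ hx
    rw [hS] at hlow
    rw [le_div_iff₀ (exp_pos _), ← exp_add]
    exact le_of_eq_of_le (by congr 1; ring) hlow
  · have hupp := prod_one_sub_le_exp_neg_sum (A ×ˢ C) fun p hp =>
      (le_abs_self _).trans ((hx p hp).trans (by norm_num))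
    rw [hS] at hupp
    rw [div_le_iff₀ (exp_pos _), ← exp_add]
    exact hupp.trans_eq (by congr 1; ring)
  · rw [hη_split, abs_le]
    constructor <;> linarith
  · rw [hη_split, abs_neg, abs_le]
    constructor <;> linarith

theorem stmt16_general
    (a b φmin φmax : ℝ) :
    ∀ ε : ℝ, 0 < ε → ∃ N : ℕ, ∀ n : ℕ, N ≤ n →
      ∀ A B C : Finset (Fin n),
        Disjoint A B → Disjoint A C → Disjoint B C → A ∪ B ∪ C = Finset.univ →
        ((A ∪ B).card : ℝ) ≤ (n : ℝ) ^ ((1 : ℝ) / 8) →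
        ∀ (τ : Fin n → Bool) (ψ : Fin n → ℝ),
          (∀ u, ψ u ∈ Set.Icc φmin φmax) →
          |∑ u ∈ C, ψ u * sgn τ u| ≤ (n : ℝ) ^ ((3 : ℝ) / 4) →
          |QAC a b n A C τ ψ /
              Real.exp (-((a + b) / (2 * n)) * (∑ u ∈ A, ψ u) * (∑ u ∈ C, ψ u)) - 1| ≤ ε := by
  intro ε hε
  set M := max |φmin| |φmax|
  set K := max |a| |b| * M ^ 2
  set c := |a - b| * M / 2 + 2 * K ^ 2
  have hlim : Tendsto (fun n : ℕ => c * (n : ℝ) ^ (-(1 / 8) : ℝ)) atTop (𝓝 0) := by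
    simpa using ((tendsto_rpow_neg_atTop (by norm_num : (0 : ℝ) < 1 / 8)).comp
      tendsto_natCast_atTop_atTop).const_mul c
  obtain ⟨N, hN⟩ := eventually_atTop.mp <|
    (hlim.eventually (ge_mem_nhds (lt_min one_pos (half_pos hε)))).and <|
      (tendsto_natCast_atTop_atTop.eventually_ge_atTop (2 * K)).and (eventually_gt_atTop 0)
  refine ⟨N, fun n hn A B C _ _ _ _ hcard τ ψ hψ hC => ?_⟩
  obtain ⟨hη, hK, hn₀⟩ := hN n hn
  calc _ ≤ 2 * (c * (n : ℝ) ^ (-(1 / 8) : ℝ)) :=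
        abs_QAC_div_exp_sub_one_le (fun u => abs_le_max_abs_abs (hψ u).1 (hψ u).2) hn₀ hK
          ((Nat.cast_le.mpr (card_le_card subset_union_left)).trans (by simpa using hcard))
          (by simpa using hC) (hη.trans (min_le_left _ _))
    _ ≤ ε := by linarith [min_le_right 1 (ε / 2)]

/-- **Uniform asymptotics of the interaction term `Q_{A,C}`.**
Let `A, B, C` partition the `n` vertices with `|A ∪ B| ≤ n^{1/8}`, and let `Ω(n)` be the set of
spin/weight configurations `(τ, ψ)` with `|∑_{u∈C} ψ_u τ_u| ≤ n^{3/4}` (spins in `±1`, weights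
in `[φmin, φmax]`).  Then, uniformly over `(τ,ψ) ∈ Ω(n)` (and over graphs with no `A`–`C`
edges, on which `Q_{A,C}` does not depend),
`Q_{A,C}(τ,ψ) = (1 + o_n(1)) · exp(-((a+b)/(2n))·‖A‖·‖C‖)` where `‖U‖ = ∑_{u∈U} ψ_u`. -/
theorem stmt16
    (a b φmin φmax : ℝ) (ha : 0 < a) (hb : 0 < b)
    (hφmin : 0 < φmin) (hφ : φmin ≤ φmax) :
    ∀ ε : ℝ, 0 < ε → ∃ N : ℕ, ∀ n : ℕ, N ≤ n →
      ∀ A B C : Finset (Fin n),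
        Disjoint A B → Disjoint A C → Disjoint B C → A ∪ B ∪ C = Finset.univ →
        ((A ∪ B).card : ℝ) ≤ (n : ℝ) ^ ((1 : ℝ) / 8) →
        ∀ (τ : Fin n → Bool) (ψ : Fin n → ℝ),
          (∀ u, ψ u ∈ Set.Icc φmin φmax) →
          |∑ u ∈ C, ψ u * sgn τ u| ≤ (n : ℝ) ^ ((3 : ℝ) / 4) →
          |QAC a b n A C τ ψ /
              Real.exp (-((a + b) / (2 * n)) * (∑ u ∈ A, ψ u) * (∑ u ∈ C, ψ u)) - 1| ≤ ε :=
  stmt16_general a b φmin φmax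
end
end
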